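/- arXiv:2309.11255 — 7 statements merged into one kernel-verified Lean document; each statement's English description precedes it below -/
import Mathlib

section
/- Let C ⊆ ℝⁿ be a closed convex cone and let A be a real n×n matrix. Then A ∈ M(C) if and only if A is cross-positive on C, i.e., for all x ∈ C and ξ ∈ C^∨ with ⟨x, ξ⟩ = 0 one has ⟨Ax, ξ⟩ ≥ 0. -/
open Matrix

/-- The dual cone of a set `C ⊆ ℝⁿ`. -/
def dualCone {n : ℕ} (C : Set (Fin n → ℝ)) : Set (Fin n → ℝ) :=
  {y | ∀ x ∈ C, 0 ≤ x ⬝ᵥ y}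

/-- `A ∈ M(C)`: for every `t ≥ 0` the matrix exponential `exp(tA)` maps `C` into `C`. -/
def memM {n : ℕ} (C : Set (Fin n → ℝ)) (A : Matrix (Fin n) (Fin n) ℝ) : Prop :=
  ∀ t : ℝ, 0 ≤ t → ∀ x ∈ C, (NormedSpace.exp (t • A)).mulVec x ∈ C


/-!
Necessity: `t ↦ ⟪exp (t A) x, ξ⟫` is nonnegative for `t ≥ 0` and vanishes at `0`, so its
derivative `⟪A x, ξ⟫` at `0` is nonnegative.

Sufficiency: let `q` be the nearest point of `C` to `y`. Because `C` is a cone, `q - y` lies in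
`C^∨` and is orthogonal to `q`, so cross-positivity gives `⟪A q, y - q⟫ ≤ 0`. Along a trajectory
`x t = exp (t A) x₀` the squared distance `f t = d(x t, C)²` then has upper right derivative at
most `2 ⟪A x, x - q⟫ ≤ 2 ‖A‖ f t`, and Grönwall's inequality with `f 0 = 0` forces `f = 0`.
-/

open NormedSpace Metric Set Filter Topology WithLp
open scoped RealInnerProductSpace

theorem frequently_slope_lt_of_le_of_hasDerivAt {f g : ℝ → ℝ} {s g' r : ℝ}
    (hle : ∀ z, f z ≤ g z) (heq : f s = g s) (hg : HasDerivAt g g' s) (hr : g' < r) :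
    ∃ᶠ z in 𝓝[>] s, (z - s)⁻¹ * (f z - f s) < r := by
  have hslope := hg.hasDerivWithinAt (s := Ioi s)
  rw [hasDerivWithinAt_iff_tendsto_slope, sdiff_singleton_eq_self self_notMem_Ioi] at hslope
  refine (((tendsto_order.1 hslope).2 r hr).and self_mem_nhdsWithin).mono ?_ |>.frequently
  rintro z ⟨hzr, hz : s < z⟩
  rw [slope_def_field, div_eq_inv_mul] at hzr
  refine lt_of_le_of_lt ?_ hzr
  have hzs : 0 < z - s := sub_pos.2 hz
  gcongr
  exacts [hle z, heq.ge]

section InnerProductSpace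

variable {E : Type*} [NormedAddCommGroup E] [InnerProductSpace ℝ E] {K : Set E}

theorem zero_mem_of_isClosed_of_smul_mem (hK : IsClosed K)
    (hcone : ∀ x ∈ K, ∀ t : ℝ, 0 < t → t • x ∈ K) {x : E} (hx : x ∈ K) : (0 : E) ∈ K := by
  have hlim : Tendsto (fun t : ℝ => t • x) (𝓝[>] 0) (𝓝 0) := by
    simpa using ((continuous_id.smul continuous_const).tendsto (0 : ℝ)).mono_left
      nhdsWithin_le_nhds (f := fun t : ℝ => t • x)
  exact hK.mem_of_tendsto hlim (eventually_nhdsWithin_of_forall fun t ht => hcone x hx t ht)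

theorem inner_sub_eq_zero_of_normal (hcone : ∀ x ∈ K, ∀ t : ℝ, 0 < t → t • x ∈ K)
    (h0 : (0 : E) ∈ K) {y q : E} (hq : q ∈ K) (hnormal : ∀ w ∈ K, ⟪y - q, w - q⟫ ≤ 0) :
    ⟪y - q, q⟫ = 0 := by
  have h2q : ⟪y - q, (2 : ℝ) • q - q⟫ ≤ 0 := hnormal _ (hcone q hq 2 two_pos)
  have hzero : ⟪y - q, 0 - q⟫ ≤ 0 := hnormal 0 h0
  rw [show (2 : ℝ) • q - q = q by module] at h2q
  rw [zero_sub, inner_neg_right] at hzero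
  linarith

theorem inner_apply_sub_le_of_inner_apply_nonpos (L : E →L[ℝ] E) {y q : E}
    (hq : ⟪L q, y - q⟫ ≤ 0) : ⟪L y, y - q⟫ ≤ ‖L‖ * ‖y - q‖ ^ 2 :=
  calc ⟪L y, y - q⟫ = ⟪L (y - q), y - q⟫ + ⟪L q, y - q⟫ := by
        rw [map_sub, inner_sub_left, sub_add_cancel]
    _ ≤ ‖L (y - q)‖ * ‖y - q‖ + 0 := add_le_add (real_inner_le_norm _ _) hq
    _ ≤ ‖L‖ * ‖y - q‖ ^ 2 := by
        rw [add_zero, sq, ← mul_assoc]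
        gcongr
        exact L.le_opNorm _

variable [CompleteSpace E]

theorem sub_mem_innerDual_of_normal (hcone : ∀ x ∈ K, ∀ t : ℝ, 0 < t → t • x ∈ K)
    (h0 : (0 : E) ∈ K) {y q : E} (hq : q ∈ K) (hnormal : ∀ w ∈ K, ⟪y - q, w - q⟫ ≤ 0) :
    q - y ∈ ProperCone.innerDual K := by
  rw [ProperCone.mem_innerDual]
  intro w hw
  have h := hnormal w hw
  rw [inner_sub_right, inner_sub_eq_zero_of_normal hcone h0 hq hnormal] at h
  rw [← neg_sub, inner_neg_right, real_inner_comm]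
  linarith

theorem exists_infDist_eq_norm_sub_of_convex (hK : IsClosed K) (hconv : Convex ℝ K)
    (hne : K.Nonempty) (y : E) :
    ∃ q ∈ K, infDist y K = ‖y - q‖ ∧ ∀ w ∈ K, ⟪y - q, w - q⟫ ≤ 0 := by
  obtain ⟨q, hq, hmin⟩ := exists_norm_eq_iInf_of_complete_convex hne hK.isComplete hconv y
  refine ⟨q, hq, ?_, (norm_eq_iInf_iff_real_inner_le_zero hconv hq).1 hmin⟩
  simp only [hmin, infDist_eq_iInf, dist_eq_norm]

theorem mem_of_hasDerivAt_of_subtangential (hK : IsClosed K) (hconv : Convex ℝ K)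
    (L : E →L[ℝ] E)
    (hL : ∀ y q, q ∈ K → (∀ w ∈ K, ⟪y - q, w - q⟫ ≤ 0) → ⟪L q, y - q⟫ ≤ 0)
    {x : ℝ → E} (hx : ∀ s, HasDerivAt x (L (x s)) s) (hx0 : x 0 ∈ K) {t : ℝ} (ht : 0 ≤ t) :
    x t ∈ K := by
  choose q hqK hqdist hqnormal using exists_infDist_eq_norm_sub_of_convex hK hconv ⟨_, hx0⟩
  set f : ℝ → ℝ := fun s => infDist (x s) K ^ 2
  have hx_cont : Continuous x := continuous_iff_continuousAt.2 fun s => (hx s).continuousAt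
  have hf_cont : Continuous f := ((continuous_infDist_pt K).comp hx_cont).pow 2
  have hslope : ∀ s ∈ Ico 0 t, ∀ r, 2 * ⟪L (x s), x s - q (x s)⟫ < r →
      ∃ᶠ z in 𝓝[>] s, (z - s)⁻¹ * (f z - f s) < r := by
    intro s _ r hr
    refine frequently_slope_lt_of_le_of_hasDerivAt (g := fun z => ‖x z - q (x s)‖ ^ 2)
      (fun z => ?_) (by simp only [f, hqdist]) ((hx s).sub_const _).norm_sq ?_
    · exact pow_le_pow_left₀ infDist_nonneg
        ((infDist_le_dist_of_mem (hqK (x s))).trans_eq (dist_eq_norm _ _)) 2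
    · rwa [real_inner_comm]
  have hbound : ∀ s ∈ Ico 0 t, 2 * ⟪L (x s), x s - q (x s)⟫ ≤ 2 * ‖L‖ * f s + 0 := by
    intro s _
    have hLs := inner_apply_sub_le_of_inner_apply_nonpos L (hL _ _ (hqK (x s)) (hqnormal (x s)))
    simp only [f, hqdist]
    linarith
  have hf0 : f 0 ≤ 0 := by simp [f, infDist_zero_of_mem hx0]
  have hft := le_gronwallBound_of_liminf_deriv_right_le hf_cont.continuousOn hslope hf0 hbound t
    ⟨ht, le_rfl⟩
  rw [gronwallBound_ε0_δ0] at hft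
  rw [hK.mem_iff_infDist_zero ⟨_, hx0⟩]
  exact pow_eq_zero_iff two_ne_zero |>.1 (le_antisymm hft (sq_nonneg _))

theorem mapsTo_exp_smul_of_subtangential (hK : IsClosed K) (hconv : Convex ℝ K) (L : E →L[ℝ] E)
    (hL : ∀ y q, q ∈ K → (∀ w ∈ K, ⟪y - q, w - q⟫ ≤ 0) → ⟪L q, y - q⟫ ≤ 0) {t : ℝ}
    (ht : 0 ≤ t) : MapsTo ⇑(exp (t • L)) K K := by
  intro x₀ hx₀
  have hx (s : ℝ) : HasDerivAt (fun s : ℝ => exp (s • L) x₀) (L (exp (s • L) x₀)) s := by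
    simpa using (hasDerivAt_exp_smul_const' L s).clm_apply (hasDerivAt_const s x₀)
  exact mem_of_hasDerivAt_of_subtangential hK hconv L hL hx (by simpa using hx₀) ht

theorem inner_apply_nonneg_of_mapsTo_exp_smul (L : E →L[ℝ] E)
    (hL : ∀ t : ℝ, 0 ≤ t → MapsTo ⇑(exp (t • L)) K K) {x ξ : E} (hx : x ∈ K)
    (hξ : ξ ∈ ProperCone.innerDual K) (hxξ : ⟪x, ξ⟫ = 0) : 0 ≤ ⟪L x, ξ⟫ := by
  set f : ℝ → ℝ := fun t => ⟪exp (t • L) x, ξ⟫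
  have hderiv : HasDerivAt f ⟪L x, ξ⟫ 0 := by
    simpa [f] using ((hasDerivAt_exp_smul_const' L (0 : ℝ)).clm_apply
      (hasDerivAt_const 0 x)).inner ℝ (hasDerivAt_const 0 ξ)
  have hmin : IsLocalMinOn f (Ici 0) 0 :=
    Filter.eventually_of_mem self_mem_nhdsWithin fun t ht => by
      simpa [f, hxξ] using hξ (hL t ht hx)
  simpa using hmin.hasFDerivWithinAt_nonneg hderiv.hasDerivWithinAt.hasFDerivWithinAt
    (mem_posTangentConeAt_of_segment_subset (y := (1 : ℝ))
      ((segment_subset_Icc (by norm_num)).trans Icc_subset_Ici_self))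

theorem mapsTo_exp_smul_iff_crossPositive (hK : IsClosed K) (hconv : Convex ℝ K)
    (hcone : ∀ x ∈ K, ∀ t : ℝ, 0 < t → t • x ∈ K) (L : E →L[ℝ] E) :
    (∀ t : ℝ, 0 ≤ t → MapsTo ⇑(exp (t • L)) K K) ↔
      ∀ x ∈ K, ∀ ξ ∈ ProperCone.innerDual K, ⟪x, ξ⟫ = 0 → 0 ≤ ⟪L x, ξ⟫ := by
  refine ⟨fun hL x hx ξ hξ hxξ => inner_apply_nonneg_of_mapsTo_exp_smul L hL hx hξ hxξ,
    fun hcross t ht => mapsTo_exp_smul_of_subtangential hK hconv L (fun y q hq hnormal => ?_) ht⟩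
  have h0 := zero_mem_of_isClosed_of_smul_mem hK hcone hq
  have horth : ⟪q, q - y⟫ = 0 := by
    rw [real_inner_comm, ← neg_sub, inner_neg_left,
      inner_sub_eq_zero_of_normal hcone h0 hq hnormal, neg_zero]
  have hLq := hcross q hq (q - y) (sub_mem_innerDual_of_normal hcone h0 hq hnormal) horth
  rw [← neg_sub, inner_neg_right] at hLq
  linarith

end InnerProductSpace

open scoped Matrix.Norms.L2Operator in
theorem Matrix.toEuclideanCLM_exp {ι : Type*} [Fintype ι] [DecidableEq ι] (A : Matrix ι ι ℝ) :
    toEuclideanCLM (𝕜 := ℝ) (exp A) = exp (toEuclideanCLM (𝕜 := ℝ) A) :=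
  map_exp_of_mem_ball (𝕂 := ℝ) _
    (AddMonoidHomClass.isometry_of_norm _ l2_opNorm_toEuclideanCLM).continuous A
    ((expSeries_radius_eq_top ℝ (Matrix ι ι ℝ)).symm ▸ edist_lt_top _ _)

theorem EuclideanSpace.real_inner_eq_dotProduct {ι : Type*} [Fintype ι]
    (x y : EuclideanSpace ℝ ι) : ⟪x, y⟫ = ofLp x ⬝ᵥ ofLp y := by
  rw [inner_eq_star_dotProduct, star_trivial, dotProduct_comm]

section Matrix

variable {n : ℕ} {C : Set (Fin n → ℝ)}

theorem memM_iff_mapsTo_exp_smul_toEuclideanCLM (A : Matrix (Fin n) (Fin n) ℝ) :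
    memM C A ↔ ∀ t : ℝ, 0 ≤ t →
      MapsTo ⇑(exp (t • toEuclideanCLM (𝕜 := ℝ) A)) (ofLp ⁻¹' C) (ofLp ⁻¹' C) := by
  simp only [← map_smul, ← Matrix.toEuclideanCLM_exp, MapsTo, mem_preimage,
    Matrix.ofLp_toEuclideanCLM]
  exact ⟨fun h t ht x hx => h t ht _ hx, fun h t ht x hx => h t ht (x := toLp 2 x) hx⟩

theorem mem_innerDual_preimage_ofLp_iff {ξ : EuclideanSpace ℝ (Fin n)} :
    ξ ∈ ProperCone.innerDual (ofLp ⁻¹' C) ↔ ofLp ξ ∈ dualCone C := by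
  simp only [ProperCone.mem_innerDual, mem_preimage, dualCone, mem_ofPred_eq,
    EuclideanSpace.real_inner_eq_dotProduct]
  exact ⟨fun h x hx => h (x := toLp 2 x) hx, fun h x hx => h _ hx⟩

end Matrix

/-- A matrix `A` belongs to `M(C)` iff it is cross-positive on `C`. -/
theorem memM_iff_crossPositive {n : ℕ} (C : Set (Fin n → ℝ))
    (hclosed : IsClosed C) (hconv : Convex ℝ C)
    (hcone : ∀ x ∈ C, ∀ t : ℝ, 0 < t → t • x ∈ C)
    (A : Matrix (Fin n) (Fin n) ℝ) :
    memM C A ↔ ∀ x ∈ C, ∀ ξ ∈ dualCone C, x ⬝ᵥ ξ = 0 → 0 ≤ A.mulVec x ⬝ᵥ ξ := by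
  rw [memM_iff_mapsTo_exp_smul_toEuclideanCLM, mapsTo_exp_smul_iff_crossPositive
    (hclosed.preimage (PiLp.continuous_ofLp 2 _))
    (hconv.linear_preimage (WithLp.linearEquiv 2 ℝ (Fin n → ℝ)).toLinearMap)
    (fun x hx t ht => hcone _ hx t ht)]
  simp only [mem_preimage, mem_innerDual_preimage_ofLp_iff,
    EuclideanSpace.real_inner_eq_dotProduct, Matrix.ofLp_toEuclideanCLM]
  exact ⟨fun h x hx ξ hξ => h (toLp 2 x) hx (toLp 2 ξ) hξ, fun h x hx ξ hξ => h _ hx _ hξ⟩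
end

section
/- Let C ⊆ ℝⁿ be a closed convex cone. Then M(C) is a closed convex cone in the space of real n×n matrices: it is a closed set, it is convex, and it is closed under multiplication by nonnegative scalars. -/
/-!
Membership in `M(C)` is a family of conditions `exp (t • A) *ᵥ x ∈ C`, each closed in `A`, and
scaling `A` by `s ≥ 0` only reparametrises `t`. For sums one uses the Lie product formula
`(exp (A / k) * exp (B / k)) ^ k → exp (A + B)`: every factor maps `C` into `C`, hence so does
every approximant, and `C` is closed. The formula follows from
`exp (A / k) * exp (B / k) - exp ((A + B) / k) = o(1 / k)` (both curves `s ↦ exp (s • A) * exp (s • B)`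
and `s ↦ exp (s • (A + B))` have derivative `A + B` at `0`) and the telescoping estimate
`‖a ^ k - b ^ k‖ ≤ k M ^ (k - 1) ‖a - b‖`.
-/

open Matrix

open Filter Topology NormedSpace

theorem norm_pow_succ_sub_pow_succ_le {R : Type*} [SeminormedRing R] {a b : R} {M : ℝ}
    (ha : ‖a‖ ≤ M) (hb : ‖b‖ ≤ M) (k : ℕ) :
    ‖a ^ (k + 1) - b ^ (k + 1)‖ ≤ (k + 1) * M ^ k * ‖a - b‖ := by
  induction k with
  | zero => simp
  | succ k ih =>
    have hM : 0 ≤ M := (norm_nonneg a).trans ha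
    have hbk : ‖b ^ (k + 1)‖ ≤ M ^ (k + 1) :=
      (norm_pow_le' b k.succ_pos).trans (pow_le_pow_left₀ (norm_nonneg b) hb _)
    calc ‖a ^ (k + 2) - b ^ (k + 2)‖
        = ‖a * (a ^ (k + 1) - b ^ (k + 1)) + (a - b) * b ^ (k + 1)‖ := by
          rw [mul_sub, sub_mul, sub_add_sub_cancel, pow_succ' a, pow_succ' b]
      _ ≤ ‖a‖ * ‖a ^ (k + 1) - b ^ (k + 1)‖ + ‖a - b‖ * ‖b ^ (k + 1)‖ :=
          (norm_add_le _ _).trans (add_le_add (norm_mul_le _ _) (norm_mul_le _ _))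
      _ ≤ M * ((k + 1) * M ^ k * ‖a - b‖) + ‖a - b‖ * M ^ (k + 1) := by gcongr
      _ = (↑(k + 1) + 1) * M ^ (k + 1) * ‖a - b‖ := by push_cast; ring

theorem tendsto_pow_sub_pow_of_tendsto_mul_norm_sub {R : Type*} [SeminormedRing R]
    {a b : ℕ → R} {c : ℝ} (hc : 0 ≤ c)
    (ha : ∀ k, ‖a k‖ ≤ Real.exp (c / k)) (hb : ∀ k, ‖b k‖ ≤ Real.exp (c / k))
    (hab : Tendsto (fun k : ℕ => k * ‖a k - b k‖) atTop (𝓝 0)) :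
    Tendsto (fun k => a k ^ k - b k ^ k) atTop (𝓝 0) := by
  refine squeeze_zero_norm' ?_ (by simpa using hab.const_mul (Real.exp c))
  filter_upwards [eventually_ne_atTop 0] with k hk
  obtain ⟨j, rfl⟩ := Nat.exists_eq_succ_of_ne_zero hk
  have hexp : Real.exp (c / (j + 1 : ℕ)) ^ j ≤ Real.exp c := by
    rw [← Real.exp_nat_mul, Real.exp_le_exp]
    push_cast
    rw [mul_div_assoc', div_le_iff₀ (by positivity)]
    nlinarith
  calc ‖a (j + 1) ^ (j + 1) - b (j + 1) ^ (j + 1)‖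
      ≤ (j + 1) * Real.exp (c / (j + 1 : ℕ)) ^ j * ‖a (j + 1) - b (j + 1)‖ :=
        norm_pow_succ_sub_pow_succ_le (ha _) (hb _) j
    _ ≤ (j + 1) * Real.exp c * ‖a (j + 1) - b (j + 1)‖ := by gcongr
    _ = Real.exp c * ((j + 1 : ℕ) * ‖a (j + 1) - b (j + 1)‖) := by push_cast; ring

theorem HasDerivAt.tendsto_natCast_smul_inv {E : Type*} [NormedAddCommGroup E] [NormedSpace ℝ E]
    {f : ℝ → E} {f' : E} (hf : HasDerivAt f f' 0) (hf0 : f 0 = 0) :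
    Tendsto (fun k : ℕ => (k : ℝ) • f (k : ℝ)⁻¹) atTop (𝓝 f') := by
  have hinv : Tendsto (fun k : ℕ => (k : ℝ)⁻¹) atTop (𝓝[≠] 0) :=
    (tendsto_inv_atTop_nhdsGT_zero.comp tendsto_natCast_atTop_atTop).mono_right
      (nhdsWithin_mono _ fun _ hx => ne_of_gt hx)
  refine (hf.tendsto_slope.comp hinv).congr fun k => ?_
  simp [slope, hf0]

namespace NormedSpace

variable {𝔸 : Type*} [NormedRing 𝔸] [NormedAlgebra ℝ 𝔸]

theorem norm_exp_le_exp_norm [NormOneClass 𝔸] (x : 𝔸) : ‖exp x‖ ≤ Real.exp ‖x‖ := by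
  rw [exp_eq_tsum ℝ, Real.exp_eq_exp_ℝ, exp_eq_tsum ℝ]
  refine (norm_tsum_le_tsum_norm (norm_expSeries_summable' x)).trans ?_
  refine (norm_expSeries_summable' x).tsum_le_tsum (fun k => ?_) (expSeries_summable' ‖x‖)
  rw [norm_smul, smul_eq_mul, norm_inv, RCLike.norm_natCast]
  gcongr
  exact norm_pow_le x k

variable [CompleteSpace 𝔸]

theorem exp_inv_natCast_smul_pow (x : 𝔸) {k : ℕ} (hk : k ≠ 0) :
    exp ((k : ℝ)⁻¹ • x) ^ k = exp x := by
  let : NormedAlgebra ℚ 𝔸 := NormedAlgebra.restrictScalars ℚ ℝ 𝔸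
  rw [← exp_nsmul, ← Nat.cast_smul_eq_nsmul ℝ, smul_smul, mul_inv_cancel₀ (Nat.cast_ne_zero.2 hk),
    one_smul]

theorem tendsto_natCast_smul_exp_mul_exp_sub_exp_add (a b : 𝔸) :
    Tendsto (fun k : ℕ => (k : ℝ) • (exp ((k : ℝ)⁻¹ • a) * exp ((k : ℝ)⁻¹ • b) -
      exp ((k : ℝ)⁻¹ • (a + b)))) atTop (𝓝 0) := by
  have hmul := (hasDerivAt_exp_smul_const (𝕂 := ℝ) a 0).mul (hasDerivAt_exp_smul_const b 0)
  have hadd := hasDerivAt_exp_smul_const (𝕂 := ℝ) (a + b) 0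
  simp only [zero_smul, exp_zero, one_mul, mul_one] at hmul hadd
  simpa using (hmul.sub hadd).tendsto_natCast_smul_inv (by simp)

theorem tendsto_exp_mul_exp_pow [NormOneClass 𝔸] (a b : 𝔸) :
    Tendsto (fun k : ℕ => (exp ((k : ℝ)⁻¹ • a) * exp ((k : ℝ)⁻¹ • b)) ^ k) atTop
      (𝓝 (exp (a + b))) := by
  have hbound (x : 𝔸) (k : ℕ) : ‖exp ((k : ℝ)⁻¹ • x)‖ ≤ Real.exp (‖x‖ / k) := by
    refine (norm_exp_le_exp_norm _).trans (Real.exp_le_exp.2 (le_of_eq ?_))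
    rw [norm_smul, norm_inv, RCLike.norm_natCast, inv_mul_eq_div]
  have hsplit : ∀ k : ℕ, ‖exp ((k : ℝ)⁻¹ • a) * exp ((k : ℝ)⁻¹ • b)‖ ≤
      Real.exp ((‖a‖ + ‖b‖) / k) := fun k => by
    rw [add_div, Real.exp_add]
    exact (norm_mul_le _ _).trans (mul_le_mul (hbound a k) (hbound b k) (norm_nonneg _)
      (Real.exp_nonneg _))
  have hsum (k : ℕ) : ‖exp ((k : ℝ)⁻¹ • (a + b))‖ ≤ Real.exp ((‖a‖ + ‖b‖) / k) :=
    (hbound _ k).trans (Real.exp_le_exp.2 (by gcongr; exact norm_add_le a b))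
  have hdiff := tendsto_pow_sub_pow_of_tendsto_mul_norm_sub (by positivity) hsplit hsum
    (by simpa [norm_smul] using (tendsto_natCast_smul_exp_mul_exp_sub_exp_add a b).norm)
  refine tendsto_sub_nhds_zero_iff.1 (hdiff.congr' ?_)
  filter_upwards [eventually_ne_atTop 0] with k hk
  rw [exp_inv_natCast_smul_pow _ hk]

end NormedSpace

open Set

theorem Matrix.tendsto_exp_mul_exp_pow {ι : Type*} [Fintype ι] [DecidableEq ι]
    (A B : Matrix ι ι ℝ) :
    Tendsto (fun k : ℕ => (exp ((k : ℝ)⁻¹ • A) * exp ((k : ℝ)⁻¹ • B)) ^ k) atTop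
      (𝓝 (exp (A + B))) := by
  -- The ℓ∞ operator norm satisfies `‖1‖ = 1` only for nonempty `ι`.
  cases isEmpty_or_nonempty ι
  · exact tendsto_const_nhds.congr fun _ => Subsingleton.elim _ _
  · open scoped Norms.Operator in exact NormedSpace.tendsto_exp_mul_exp_pow A B

theorem Matrix.continuous_exp {ι : Type*} [Fintype ι] [DecidableEq ι] :
    Continuous (exp : Matrix ι ι ℝ → Matrix ι ι ℝ) :=
  open scoped Norms.Operator in exp_continuous

theorem Set.MapsTo.matrix_pow_mulVec {ι R : Type*} [Fintype ι] [DecidableEq ι] [CommSemiring R]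
    {P : Matrix ι ι R} {C : Set (ι → R)} (hP : MapsTo P.mulVec C C) (k : ℕ) :
    MapsTo (P ^ k).mulVec C C := by
  induction k with
  | zero => exact fun x hx => by rwa [pow_zero, one_mulVec]
  | succ k ih => exact fun x hx => by rw [pow_succ, ← mulVec_mulVec]; exact ih (hP hx)

variable {n : ℕ} {C : Set (Fin n → ℝ)} {A B : Matrix (Fin n) (Fin n) ℝ}

theorem memM.smul (hA : memM C A) {s : ℝ} (hs : 0 ≤ s) : memM C (s • A) := fun t ht x hx => by
  simpa only [smul_smul] using hA (t * s) (mul_nonneg ht hs) x hx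

theorem memM.add (hC : IsClosed C) (hA : memM C A) (hB : memM C B) : memM C (A + B) := by
  intro t ht x hx
  have hstep (k : ℕ) : MapsTo (exp ((k : ℝ)⁻¹ • t • A) * exp ((k : ℝ)⁻¹ • t • B)).mulVec C C :=
    fun y hy => by
      rw [← mulVec_mulVec, smul_smul, smul_smul]
      exact hA _ (by positivity) _ (hB _ (by positivity) _ hy)
  rw [smul_add]
  exact hC.mem_of_tendsto
    (((continuous_id.matrix_mulVec continuous_const).tendsto _).comp (tendsto_exp_mul_exp_pow _ _))
    (Eventually.of_forall fun k => (hstep k).matrix_pow_mulVec k hx)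

theorem isClosed_setOf_memM (hC : IsClosed C) : IsClosed {A | memM C A} := by
  simp only [memM, Set.ofPred_forall]
  exact isClosed_iInter fun t => isClosed_iInter fun _ => isClosed_iInter fun x =>
    isClosed_iInter fun _ => hC.preimage
      ((continuous_exp.comp (continuous_const_smul t)).matrix_mulVec continuous_const)

theorem memM_isClosed_convex_cone_general {n : ℕ} (C : Set (Fin n → ℝ))
    (hclosed : IsClosed C) :
    IsClosed {A : Matrix (Fin n) (Fin n) ℝ | memM C A} ∧
    Convex ℝ {A : Matrix (Fin n) (Fin n) ℝ | memM C A} ∧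
    (∀ A : Matrix (Fin n) (Fin n) ℝ, memM C A → ∀ s : ℝ, 0 ≤ s → memM C (s • A)) :=
  ⟨isClosed_setOf_memM hclosed,
    fun _ hA _ hB _ _ ha hb _ => (hA.smul ha).add hclosed (hB.smul hb),
    fun _ hA _ hs => hA.smul hs⟩

/-- For a closed convex cone `C`, the set `M(C)` is a closed convex cone in the space of
real `n × n` matrices. -/
theorem memM_isClosed_convex_cone {n : ℕ} (C : Set (Fin n → ℝ))
    (hclosed : IsClosed C) (hconv : Convex ℝ C)
    (hcone : ∀ x ∈ C, ∀ t : ℝ, 0 < t → t • x ∈ C) :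
    IsClosed {A : Matrix (Fin n) (Fin n) ℝ | memM C A} ∧
    Convex ℝ {A : Matrix (Fin n) (Fin n) ℝ | memM C A} ∧
    (∀ A : Matrix (Fin n) (Fin n) ℝ, memM C A → ∀ s : ℝ, 0 ≤ s → memM C (s • A)) :=
  memM_isClosed_convex_cone_general C hclosed
end

section
/- Let C ⊆ ℝⁿ be a closed convex cone. Then M(C) is contained in the closure (in the space of real n×n matrices) of the set of all sums A₀ + A₁, where A₀ ranges over matrices such that exp(tA₀) maps C onto C for every t ∈ ℝ, and A₁ ranges over matrices with A₁(C) ⊆ C. -/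
/-!
The generator is the one-sided derivative of the semigroup at `0`:
`A = lim_{h → 0⁺} h⁻¹ • (exp (h • A) - 1) = lim_{h → 0⁺} ((-h⁻¹) • 1 + h⁻¹ • exp (h • A))`.
For `h > 0` the scalar matrix `(-h⁻¹) • 1` generates the group of dilations `exp (-t / h) • 1`,
which maps the cone `C` onto itself, while `h⁻¹ • exp (h • A)` maps `C` into `C` when `A ∈ M(C)`.
-/

open Matrix Pointwise

open Filter Topology

theorem tendsto_inv_smul_exp_smul_sub_one {𝕂 𝔸 : Type*} [RCLike 𝕂] [NormedRing 𝔸]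
    [NormedAlgebra 𝕂 𝔸] [CompleteSpace 𝔸] (x : 𝔸) :
    Tendsto (fun h : 𝕂 => h⁻¹ • (NormedSpace.exp (h • x) - 1)) (𝓝[≠] 0) (𝓝 x) := by
  have hderiv : HasDerivAt (fun h : 𝕂 => NormedSpace.exp (h • x)) x 0 := by
    simpa using hasDerivAt_exp_smul_const x (0 : 𝕂)
  refine (hasDerivAt_iff_tendsto_slope.mp hderiv).congr fun h => ?_
  simp [slope_def_module]

theorem exp_smul_one {𝔸 : Type*} [NormedRing 𝔸] [NormedAlgebra ℝ 𝔸] (r : ℝ) :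
    NormedSpace.exp (r • (1 : 𝔸)) = Real.exp r • (1 : 𝔸) := by
  rw [← Algebra.algebraMap_eq_smul_one, ← Algebra.algebraMap_eq_smul_one,
    ← NormedSpace.algebraMap_exp_comm, Real.exp_eq_exp_ℝ]

theorem image_smul_eq_self_of_pos {E : Type*} [AddCommGroup E] [Module ℝ E] {C : Set E}
    (hcone : ∀ x ∈ C, ∀ t : ℝ, 0 < t → t • x ∈ C) {c : ℝ} (hc : 0 < c) :
    (c • ·) '' C = C := by
  refine Set.Subset.antisymm (Set.image_subset_iff.mpr fun x hx => hcone x hx c hc) fun y hy => ?_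
  exact ⟨c⁻¹ • y, hcone y hy _ (inv_pos.mpr hc), smul_inv_smul₀ hc.ne' y⟩

section Matrix

attribute [local instance] Matrix.linftyOpNormedRing Matrix.linftyOpNormedAlgebra

variable {n : ℕ} {C : Set (Fin n → ℝ)}

theorem image_mulVec_exp_smul_smul_one (hcone : ∀ x ∈ C, ∀ t : ℝ, 0 < t → t • x ∈ C)
    (c t : ℝ) : (NormedSpace.exp (t • c • (1 : Matrix (Fin n) (Fin n) ℝ))).mulVec '' C = C := by
  -- stated separately: `exp` on matrices is elaborated with the ring structure of `Matrix`, not the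
  -- local normed one, so `rw [exp_smul_one]` finds no syntactic match
  have hexp : NormedSpace.exp ((t * c) • (1 : Matrix (Fin n) (Fin n) ℝ)) =
      Real.exp (t * c) • (1 : Matrix (Fin n) (Fin n) ℝ) := exp_smul_one _
  rw [smul_smul, hexp]
  simp_rw [smul_mulVec, one_mulVec]
  exact image_smul_eq_self_of_pos hcone (Real.exp_pos _)

theorem inv_smul_exp_smul_sub_one_mem_add (hcone : ∀ x ∈ C, ∀ t : ℝ, 0 < t → t • x ∈ C)
    {A : Matrix (Fin n) (Fin n) ℝ} (hA : memM C A) {h : ℝ} (hh : 0 < h) :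
    h⁻¹ • (NormedSpace.exp (h • A) - 1) ∈
      {A₀ : Matrix (Fin n) (Fin n) ℝ | ∀ t : ℝ, (NormedSpace.exp (t • A₀)).mulVec '' C = C} +
        {A₁ : Matrix (Fin n) (Fin n) ℝ | ∀ x ∈ C, A₁.mulVec x ∈ C} := by
  have hsplit : h⁻¹ • (NormedSpace.exp (h • A) - 1) =
      (-h⁻¹) • (1 : Matrix (Fin n) (Fin n) ℝ) + h⁻¹ • NormedSpace.exp (h • A) := by
    rw [smul_sub, neg_smul]
    abel
  rw [hsplit]
  refine Set.add_mem_add (image_mulVec_exp_smul_smul_one hcone _) fun x hx => ?_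
  rw [smul_mulVec]
  exact hcone _ (hA h hh.le x hx) _ (inv_pos.mpr hh)

theorem memM_subset_closure_sum_general {n : ℕ} (C : Set (Fin n → ℝ))
    (hcone : ∀ x ∈ C, ∀ t : ℝ, 0 < t → t • x ∈ C) :
    {A : Matrix (Fin n) (Fin n) ℝ | memM C A} ⊆
      closure ({A₀ : Matrix (Fin n) (Fin n) ℝ |
                  ∀ t : ℝ, (NormedSpace.exp (t • A₀)).mulVec '' C = C} +
               {A₁ : Matrix (Fin n) (Fin n) ℝ | ∀ x ∈ C, A₁.mulVec x ∈ C}) := by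
  intro A hA
  have hlim : Tendsto (fun h : ℝ => h⁻¹ • (NormedSpace.exp (h • A) - 1)) (𝓝[>] 0) (𝓝 A) :=
    (tendsto_inv_smul_exp_smul_sub_one A).mono_left (nhdsWithin_mono _ fun _ hh => ne_of_gt hh)
  refine mem_closure_of_tendsto hlim ?_
  filter_upwards [self_mem_nhdsWithin] with h hh
  exact inv_smul_exp_smul_sub_one_mem_add hcone hA hh

/-- `M(C)` is contained in the closure of the set of sums `A₀ + A₁`, where `exp(tA₀)` maps `C`
onto `C` for all real `t` and `A₁` maps `C` into `C`. -/
theorem memM_subset_closure_sum {n : ℕ} (C : Set (Fin n → ℝ))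
    (hclosed : IsClosed C) (hconv : Convex ℝ C)
    (hcone : ∀ x ∈ C, ∀ t : ℝ, 0 < t → t • x ∈ C) :
    {A : Matrix (Fin n) (Fin n) ℝ | memM C A} ⊆
      closure ({A₀ : Matrix (Fin n) (Fin n) ℝ |
                  ∀ t : ℝ, (NormedSpace.exp (t • A₀)).mulVec '' C = C} +
               {A₁ : Matrix (Fin n) (Fin n) ℝ | ∀ x ∈ C, A₁.mulVec x ∈ C}) :=
  memM_subset_closure_sum_general C hcone

end Matrix
end

section
/- Let C ⊆ ℝⁿ be a closed convex cone and let A be a real n×n matrix. Then exp(tA) maps C into C for every t ∈ ℝ if and only if for all x ∈ C and ξ ∈ C^∨ with ⟨x, ξ⟩ = 0 one has ⟨Ax, ξ⟩ = 0. -/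
open Matrix

/-!
Both sides split into a statement about `A` and one about `-A`: `exp (t • A)` maps `C` into
itself for all `t ≥ 0` iff `A` is cross-positive on `C`, i.e. `0 ≤ ⟪A x, ξ⟫` whenever `x ∈ C`,
`ξ ∈ C^∨` and `⟪x, ξ⟫ = 0`. Necessity: `s ↦ ⟪exp (s • A) x, ξ⟫` is nonnegative for `s ≥ 0` and
vanishes at `0`. Sufficiency is Nagumo's invariance theorem. By Hahn–Banach, cross-positivity says
that `A p` lies in the closed cone generated by `C - p`, the tangent cone of `C` at `p`. One Euler
step from the point of `C` nearest to the trajectory then shows that the distance `d(t)` of the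
trajectory to `C` satisfies `D⁺d ≤ ‖A‖ d`; since `d(0) = 0`, Gronwall gives `d ≡ 0`.
-/

open Set Filter Metric NormedSpace
open scoped Topology NNReal Pointwise

theorem exists_strongDual_neg_of_notMem_closure_hull {E : Type*} [AddCommGroup E] [Module ℝ E]
    [TopologicalSpace E] [IsTopologicalAddGroup E] [ContinuousSMul ℝ E] [LocallyConvexSpace ℝ E]
    {S : Set E} (hS : (0 : E) ∈ S) {w : E} (hw : w ∉ closure (ConvexCone.hull ℝ S : Set E)) :
    ∃ f : StrongDual ℝ E, f w < 0 ∧ ∀ v ∈ S, 0 ≤ f v := by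
  obtain ⟨f, u, hfu, huw⟩ :=
    geometric_hahn_banach_closed_point (ConvexCone.hull ℝ S).convex.closure isClosed_closure hw
  have hS' : ∀ v ∈ S, ∀ t : ℝ, 0 < t → t • v ∈ closure (ConvexCone.hull ℝ S : Set E) :=
    fun v hv t ht ↦ subset_closure ((ConvexCone.hull ℝ S).smul_mem ht (ConvexCone.subset_hull hv))
  have hu : 0 < u := by simpa using hfu _ (hS' 0 hS 1 one_pos)
  -- `f < u` on a cone forces `f ≤ 0` there
  have hle : ∀ v ∈ S, f v ≤ 0 := by
    intro v hv
    by_contra! hpos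
    have := hfu _ (hS' v hv (u / f v) (by positivity))
    rw [map_smul, smul_eq_mul, div_mul_cancel₀ _ hpos.ne'] at this
    exact lt_irrefl u this
  exact ⟨-f, by simpa using hu.trans huw, fun v hv ↦ by simpa using hle v hv⟩

theorem IsMinOn.apply_eq_zero_and_nonneg_of_smul_mem {E : Type*} [AddCommGroup E] [Module ℝ E]
    {C : Set E} (hcone : ∀ x ∈ C, ∀ t : ℝ, 0 < t → t • x ∈ C) {f : E →ₗ[ℝ] ℝ} {p : E}
    (hp : p ∈ C) (hmin : IsMinOn f C p) : f p = 0 ∧ ∀ c ∈ C, 0 ≤ f c := by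
  have h2 : f p ≤ 2 * f p := by simpa using hmin (hcone p hp 2 two_pos)
  have hhalf : f p ≤ 2⁻¹ * f p := by simpa using hmin (hcone p hp 2⁻¹ (by norm_num))
  have hp0 : f p = 0 := by linarith
  exact ⟨hp0, fun c hc ↦ hp0 ▸ hmin hc⟩

theorem LinearMap.exists_eq_dotProduct {ι R : Type*} [Fintype ι] [DecidableEq ι] [CommSemiring R]
    (f : (ι → R) →ₗ[R] R) : ∃ ξ : ι → R, ∀ v, f v = v ⬝ᵥ ξ :=
  ⟨fun i ↦ f fun j ↦ if i = j then 1 else 0, fun v ↦ by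
    simp [f.pi_apply_eq_sum_univ v, dotProduct]⟩

theorem mem_closure_hull_sub_of_dualCone {n : ℕ} {C : Set (Fin n → ℝ)}
    (hcone : ∀ x ∈ C, ∀ t : ℝ, 0 < t → t • x ∈ C) {p w : Fin n → ℝ} (hp : p ∈ C)
    (hw : ∀ ξ ∈ dualCone C, p ⬝ᵥ ξ = 0 → 0 ≤ w ⬝ᵥ ξ) :
    w ∈ closure (ConvexCone.hull ℝ (C - {p}) : Set (Fin n → ℝ)) := by
  by_contra hw'
  obtain ⟨f, hfw, hf⟩ :=
    exists_strongDual_neg_of_notMem_closure_hull (sub_self p ▸ sub_mem_sub hp rfl) hw'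
  obtain ⟨ξ, hξ⟩ := (f : (Fin n → ℝ) →ₗ[ℝ] ℝ).exists_eq_dotProduct
  simp only [ContinuousLinearMap.coe_coe] at hξ
  have hmin : IsMinOn (f : (Fin n → ℝ) →ₗ[ℝ] ℝ) C p := fun c hc ↦ by
    simpa [sub_nonneg] using hf (c - p) (sub_mem_sub hc rfl)
  obtain ⟨hp0, hdual⟩ := hmin.apply_eq_zero_and_nonneg_of_smul_mem hcone hp
  have := hw ξ (fun x hx ↦ hξ x ▸ hdual x hx) (hξ p ▸ hp0)
  linarith [hξ w]

section Subtangential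

variable {E : Type*} [NormedAddCommGroup E] [NormedSpace ℝ E] {D : Set E} {F : E → E} {K : ℝ≥0}

/-- One Euler step of length `s` from the point `p` of `D` nearest to `x`, in the direction
`μ • (c - p)` pointing into `D`. -/
theorem infDist_le_of_infDist_eq_dist (hconv : Convex ℝ D) (hF : LipschitzWith K F)
    {x p c z : E} {s μ : ℝ} (hp : p ∈ D) (hpx : infDist x D = dist x p) (hc : c ∈ D)
    (hs : 0 ≤ s) (hμ : 0 ≤ μ) (hsμ : s * μ ≤ 1) :
    infDist z D ≤ ‖z - x - s • F x‖ + (1 + s * K) * infDist x D + s * ‖F p - μ • (c - p)‖ := by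
  have hq : p + (s * μ) • (c - p) ∈ D := hconv.add_smul_sub_mem hp hc ⟨by positivity, hsμ⟩
  have hLip : ‖F x - F p‖ ≤ K * infDist x D := by
    rw [hpx, ← dist_eq_norm]
    exact hF.dist_le_mul x p
  calc infDist z D ≤ ‖z - (p + (s * μ) • (c - p))‖ := by
        simpa [dist_eq_norm] using infDist_le_dist_of_mem (x := z) hq
    _ = ‖(z - x - s • F x) + (x - p) + s • (F x - F p) + s • (F p - μ • (c - p))‖ := by
        congr 1; module
    _ ≤ ‖z - x - s • F x‖ + ‖x - p‖ + ‖s • (F x - F p)‖ + ‖s • (F p - μ • (c - p))‖ :=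
        norm_add₄_le ..
    _ ≤ _ := by
        rw [norm_smul, norm_smul, Real.norm_of_nonneg hs, ← dist_eq_norm x p, ← hpx]
        nlinarith [mul_le_mul_of_nonneg_left hLip hs]

variable [ProperSpace E]

theorem frequently_slope_infDist_lt (hD : IsClosed D) (hne : D.Nonempty) (hconv : Convex ℝ D)
    (hF : LipschitzWith K F)
    (htan : ∀ p ∈ D, F p ∈ closure (ConvexCone.hull ℝ (D - {p}) : Set E)) {y : ℝ → E} {t : ℝ}
    (hy : HasDerivWithinAt y (F (y t)) (Ici t) t) {r : ℝ} (hr : K * infDist (y t) D < r) :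
    ∃ᶠ z in 𝓝[>] t, (z - t)⁻¹ * (infDist (y z) D - infDist (y t) D) < r := by
  obtain ⟨p, hp, hpx⟩ := hD.exists_infDist_eq_dist hne (y t)
  set ε := (r - K * infDist (y t) D) / 3 with hε
  have hε0 : 0 < ε := by linarith
  obtain ⟨v, hv, hFv⟩ := Metric.mem_closure_iff.1 (htan p hp) ε hε0
  obtain ⟨μ, hμ, -, ⟨c, hc, _, rfl, rfl⟩, rfl⟩ :=
    (ConvexCone.mem_hull_of_convex (hconv.sub (convex_singleton p))).1 hv
  beta_reduce at hFv
  have hslope : ∀ᶠ z in 𝓝[>] t, dist (slope y t z) (F (y t)) < ε :=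
    ((hasDerivWithinAt_iff_tendsto_slope' (lt_irrefl t)).1
      (hasDerivWithinAt_Ioi_iff_Ici.2 hy)).eventually (ball_mem_nhds _ hε0)
  refine ((hslope.and (Ioo_mem_nhdsGT (lt_add_of_pos_right t (inv_pos.2 hμ)))).mono ?_).frequently
  rintro z ⟨hz, htz, hzμ⟩
  have hs : 0 < z - t := sub_pos.2 htz
  have hsμ : (z - t) * μ ≤ 1 := by
    rw [← le_div_iff₀ hμ, one_div]
    linarith
  have hstep : ‖y z - y t - (z - t) • F (y t)‖ ≤ (z - t) * ε := by
    rw [← vsub_eq_sub (y z), ← sub_smul_slope y t z, ← smul_sub, norm_smul,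
      Real.norm_of_nonneg hs.le, ← dist_eq_norm]
    exact mul_le_mul_of_nonneg_left hz.le hs.le
  have hbound := infDist_le_of_infDist_eq_dist (z := y z) hconv hF hp hpx hc hs.le hμ.le hsμ
  have hrε : r = 3 * ε + K * infDist (y t) D := by rw [hε]; ring
  rw [dist_eq_norm] at hFv
  rw [inv_mul_lt_iff₀ hs, hrε]
  nlinarith [mul_le_mul_of_nonneg_left hFv.le hs.le, mul_pos hs hε0]

/-- `htan` is Nagumo's subtangential condition: for convex `D`, the closure of the cone generated
by `D - p` is the tangent cone of `D` at `p`. -/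
theorem mem_of_hasDerivWithinAt_of_subtangential (hD : IsClosed D) (hconv : Convex ℝ D)
    (hF : LipschitzWith K F)
    (htan : ∀ p ∈ D, F p ∈ closure (ConvexCone.hull ℝ (D - {p}) : Set E)) {y : ℝ → E} {a b : ℝ}
    (hy : ContinuousOn y (Icc a b)) (hy' : ∀ t ∈ Ico a b, HasDerivWithinAt y (F (y t)) (Ici t) t)
    (ha : y a ∈ D) : ∀ t ∈ Icc a b, y t ∈ D := by
  intro t ht
  have hne : D.Nonempty := ⟨y a, ha⟩
  have hdist := le_gronwallBound_of_liminf_deriv_right_le (f := fun s ↦ infDist (y s) D)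
    (f' := fun s ↦ K * infDist (y s) D) (δ := 0) (K := K) (ε := 0)
    ((continuous_infDist_pt D).comp_continuousOn hy)
    (fun s hs _ hr ↦ frequently_slope_infDist_lt hD hne hconv hF htan (hy' s hs) hr)
    (by simp [infDist_zero_of_mem ha]) (fun _ _ ↦ by simp) t ht
  rw [gronwallBound_ε0_δ0] at hdist
  exact (hD.mem_iff_infDist_zero hne).2 (le_antisymm hdist infDist_nonneg)

end Subtangential

section MatrixExp

attribute [local instance] Matrix.linftyOpNormedRing Matrix.linftyOpNormedAlgebra

theorem hasDerivAt_exp_smul_mulVec {m : Type*} [Fintype m] [DecidableEq m] (A : Matrix m m ℝ)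
    (x : m → ℝ) (t : ℝ) :
    HasDerivAt (fun s : ℝ ↦ exp (s • A) *ᵥ x) (A *ᵥ (exp (t • A) *ᵥ x)) t := by
  rw [mulVec_mulVec]
  exact (LinearMap.toContinuousLinearMap ((mulVecBilin ℝ ℝ).flip x)).hasFDerivAt.comp_hasDerivAt
    t (hasDerivAt_exp_smul_const' A t)

end MatrixExp

section CrossPositive

variable {n : ℕ} {C : Set (Fin n → ℝ)}

theorem dotProduct_mulVec_nonneg_of_exp_smul_mulVec_mem (A : Matrix (Fin n) (Fin n) ℝ)
    (h : ∀ t : ℝ, 0 ≤ t → ∀ x ∈ C, exp (t • A) *ᵥ x ∈ C) {x ξ : Fin n → ℝ} (hx : x ∈ C)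
    (hξ : ξ ∈ dualCone C) (hxξ : x ⬝ᵥ ξ = 0) : 0 ≤ A *ᵥ x ⬝ᵥ ξ := by
  have hderiv : HasDerivAt (fun s : ℝ ↦ exp (s • A) *ᵥ x ⬝ᵥ ξ) (A *ᵥ x ⬝ᵥ ξ) 0 := by
    have := (LinearMap.toContinuousLinearMap ((dotProductBilin ℝ ℝ).flip ξ)).hasFDerivAt
      |>.comp_hasDerivAt 0 (hasDerivAt_exp_smul_mulVec A x 0)
    simp only [zero_smul, exp_zero, one_mulVec] at this
    exact this
  refine ge_of_tendsto ((hasDerivAt_iff_tendsto_slope.1 hderiv).mono_left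
    (nhdsGT_le_nhdsNE 0)) ?_
  filter_upwards [self_mem_nhdsWithin] with s (hs : 0 < s)
  simpa [slope_def_field, hxξ] using div_nonneg (hξ _ (h s hs.le x hx)) hs.le

theorem exp_smul_mulVec_mem_of_dotProduct_mulVec_nonneg (hclosed : IsClosed C) (hconv : Convex ℝ C)
    (hcone : ∀ x ∈ C, ∀ t : ℝ, 0 < t → t • x ∈ C) (A : Matrix (Fin n) (Fin n) ℝ)
    (hA : ∀ x ∈ C, ∀ ξ ∈ dualCone C, x ⬝ᵥ ξ = 0 → 0 ≤ A *ᵥ x ⬝ᵥ ξ) {t : ℝ} (ht : 0 ≤ t)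
    {x : Fin n → ℝ} (hx : x ∈ C) : exp (t • A) *ᵥ x ∈ C := by
  have hderiv := hasDerivAt_exp_smul_mulVec A x
  refine mem_of_hasDerivWithinAt_of_subtangential hclosed hconv
    (LinearMap.toContinuousLinearMap A.mulVecLin).lipschitz
    (fun p hp ↦ mem_closure_hull_sub_of_dualCone hcone hp (hA p hp))
    (fun s _ ↦ (hderiv s).continuousAt.continuousWithinAt) (fun s _ ↦ (hderiv s).hasDerivWithinAt)
    (by simpa using hx) t ⟨ht, le_rfl⟩

theorem exp_smul_mulVec_mem_iff (hclosed : IsClosed C) (hconv : Convex ℝ C)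
    (hcone : ∀ x ∈ C, ∀ t : ℝ, 0 < t → t • x ∈ C) (A : Matrix (Fin n) (Fin n) ℝ) :
    (∀ t : ℝ, 0 ≤ t → ∀ x ∈ C, exp (t • A) *ᵥ x ∈ C) ↔
      ∀ x ∈ C, ∀ ξ ∈ dualCone C, x ⬝ᵥ ξ = 0 → 0 ≤ A *ᵥ x ⬝ᵥ ξ :=
  ⟨fun h _ hx _ hξ hxξ ↦ dotProduct_mulVec_nonneg_of_exp_smul_mulVec_mem A h hx hξ hxξ,
    fun hA _ ht _ hx ↦
      exp_smul_mulVec_mem_of_dotProduct_mulVec_nonneg hclosed hconv hcone A hA ht hx⟩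

end CrossPositive

/-- `exp(tA)` maps `C` into `C` for every real `t` iff for all `x ∈ C` and `ξ ∈ C^∨` with
`⟨x, ξ⟩ = 0` one has `⟨Ax, ξ⟩ = 0`. -/
theorem exp_mapsTo_forall_real_iff {n : ℕ} (C : Set (Fin n → ℝ))
    (hclosed : IsClosed C) (hconv : Convex ℝ C)
    (hcone : ∀ x ∈ C, ∀ t : ℝ, 0 < t → t • x ∈ C)
    (A : Matrix (Fin n) (Fin n) ℝ) :
    (∀ t : ℝ, ∀ x ∈ C, (NormedSpace.exp (t • A)).mulVec x ∈ C) ↔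
      (∀ x ∈ C, ∀ ξ ∈ dualCone C, x ⬝ᵥ ξ = 0 → A.mulVec x ⬝ᵥ ξ = 0) := by
  have hA := exp_smul_mulVec_mem_iff hclosed hconv hcone A
  have hnegA := exp_smul_mulVec_mem_iff hclosed hconv hcone (-A)
  simp only [smul_neg, ← neg_smul, neg_mulVec, neg_dotProduct, neg_nonneg] at hnegA
  constructor
  · intro h x hx ξ hξ hxξ
    exact le_antisymm (hnegA.1 (fun t _ ↦ h (-t)) x hx ξ hξ hxξ)
      (hA.1 (fun t _ ↦ h t) x hx ξ hξ hxξ)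
  · intro h t
    rcases le_total 0 t with ht | ht
    · exact hA.2 (fun x hx ξ hξ hxξ ↦ (h x hx ξ hξ hxξ).ge) t ht
    · simpa using hnegA.2 (fun x hx ξ hξ hxξ ↦ (h x hx ξ hξ hxξ).le) (-t) (neg_nonneg.2 ht)
end

section
/- Let C ⊆ ℝⁿ be a proper cone. Suppose A ∈ M(C) is Hurwitz, and D₁, D₂ are invertible real n×n matrices with D₁(C) = C and D₂(C) = C. If D₁AD₂ ∈ M(C), then D₁AD₂ is Hurwitz. -/
/-!
Put `B = D₁ A D₂`. As `A` is Hurwitz, `σ(exp A) ⊆ exp σ(A)` lies in the open unit disc, so Gelfand's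
formula gives `exp (k A) → 0`. Hence `-A⁻¹ y = lim ∫₀^k exp (s A) y ds ∈ C` for `y ∈ C`: the
invertible matrix `-A⁻¹` maps `C`, and therefore `int C`, into itself. For `e ∈ int C` the
automorphisms then give `x₀ = D₂⁻¹ (-A⁻¹) D₁⁻¹ e ∈ int C` with `-B x₀ = e ∈ int C`.

For small `δ > 0` still `-(B + δ) x₀ ∈ C`, so `x₀ - exp (t (B + δ)) x₀ ∈ C`. Order intervals of a
closed pointed cone are bounded and `x₀` is interior, so the operators `exp (t (B + δ))` are
uniformly bounded, i.e. `‖exp (t B)‖ ≤ K e^{-δ t}`. As `e^{t μ}` lies in the spectrum of `exp (t B)`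
for every eigenvalue `μ` of `B`, this forces `Re μ ≤ -δ < 0`.
-/

open Matrix

/-- A real square matrix is Hurwitz if all its eigenvalues (as a complex matrix) have
negative real part. -/
def IsHurwitz {n : ℕ} (A : Matrix (Fin n) (Fin n) ℝ) : Prop :=
  ∀ μ ∈ spectrum ℂ (A.map (fun a => (a : ℂ))), μ.re < 0

open NormedSpace Filter Topology Set MeasureTheory

section Cone

variable {V : Type*} [NormedAddCommGroup V] [NormedSpace ℝ V] {C : Set V}

theorem add_mem_of_convex_of_smul_mem (hconv : Convex ℝ C)
    (hcone : ∀ x ∈ C, ∀ t : ℝ, 0 < t → t • x ∈ C) {x y : V} (hx : x ∈ C) (hy : y ∈ C) :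
    x + y ∈ C := by
  have hmid : (1 / 2 : ℝ) • x + (1 / 2 : ℝ) • y ∈ C := hconv hx hy (by norm_num) (by norm_num)
    (by norm_num)
  simpa [smul_add, smul_smul] using hcone _ hmid 2 two_pos

theorem intervalIntegral_mem_of_convex_cone [CompleteSpace V] (hclosed : IsClosed C)
    (hconv : Convex ℝ C) (hcone : ∀ x ∈ C, ∀ t : ℝ, 0 < t → t • x ∈ C) (h0 : (0 : V) ∈ C)
    {g : ℝ → V} (hg : Continuous g) {t : ℝ} (ht : 0 ≤ t) (hgC : ∀ s ∈ Icc 0 t, g s ∈ C) :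
    ∫ s in (0 : ℝ)..t, g s ∈ C := by
  rcases ht.eq_or_lt with rfl | ht
  · simpa using h0
  have hvol : volume (Ioc 0 t) = ENNReal.ofReal t := by simp
  have havg : ⨍ s in Ioc 0 t, g s ∈ C :=
    hconv.set_average_mem hclosed (by simp [hvol, ht]) (by simp [hvol])
      ((ae_restrict_iff' measurableSet_Ioc).2
        (.of_forall fun s hs => hgC s (Ioc_subset_Icc_self hs)))
      hg.integrableOn_Ioc
  rw [intervalIntegral.integral_of_le ht.le, ← measure_smul_setAverage _ (by simp [hvol])]
  exact hcone _ havg _ (by simpa using ht)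

theorem exists_norm_le_of_mem_of_sub_mem [ProperSpace V] (hclosed : IsClosed C)
    (hcone : ∀ x ∈ C, ∀ t : ℝ, 0 < t → t • x ∈ C) (hpointed : C ∩ (-C) = {0}) (z : V) :
    ∃ M, ∀ u ∈ C, z - u ∈ C → ‖u‖ ≤ M := by
  -- `-(C ∩ sphere)` is compact and disjoint from `C`, hence at positive distance `r` from it
  have hdisj : Disjoint (-(C ∩ Metric.sphere 0 1)) C := by
    refine Set.disjoint_left.2 fun w ⟨hwC, hw1⟩ hw => ?_
    have : -w ∈ C ∩ -C := ⟨hwC, by simpa using hw⟩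
    rw [hpointed] at this
    simp_all
  obtain ⟨r, hr, hrC⟩ := Metric.exists_pos_forall_lt_edist
    ((isCompact_sphere 0 1).inter_left hclosed).neg hclosed hdisj
  refine ⟨‖z‖ / r, fun u hu hzu => ?_⟩
  rcases eq_or_ne u 0 with rfl | hu0
  · rw [norm_zero]; positivity
  have hnu : 0 < ‖u‖ := norm_pos_iff.2 hu0
  have := hrC (-(‖u‖⁻¹ • u)) (by simp [hcone u hu _ (inv_pos.2 hnu), norm_smul, hnu.ne'])
    (‖u‖⁻¹ • (z - u)) (hcone _ hzu _ (inv_pos.2 hnu))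
  have hdiff : -(‖u‖⁻¹ • u) - ‖u‖⁻¹ • (z - u) = -(‖u‖⁻¹ • z) := by
    rw [smul_sub]; abel
  rw [edist_dist, dist_eq_norm, hdiff, norm_neg, norm_smul, norm_inv, norm_norm,
    ENNReal.coe_lt_ofReal, lt_inv_mul_iff₀ hnu] at this
  rw [le_div_iff₀ (NNReal.coe_pos.2 hr)]
  exact this.le

theorem exists_opNorm_le_of_mapsTo_of_sub_mem [ProperSpace V] (hclosed : IsClosed C)
    (hconv : Convex ℝ C) (hcone : ∀ x ∈ C, ∀ t : ℝ, 0 < t → t • x ∈ C)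
    (hpointed : C ∩ (-C) = {0}) {x₀ : V} (hx₀ : x₀ ∈ interior C) :
    ∃ K, ∀ f : V →L[ℝ] V, MapsTo f C C → x₀ - f x₀ ∈ C → ‖f‖ ≤ K := by
  have hadd {x y : V} (hx : x ∈ C) (hy : y ∈ C) : x + y ∈ C :=
    add_mem_of_convex_of_smul_mem hconv hcone hx hy
  obtain ⟨M, hM⟩ := exists_norm_le_of_mem_of_sub_mem hclosed hcone hpointed ((2 : ℝ) • x₀)
  obtain ⟨r, hr, hball⟩ :=
    Metric.nhds_basis_closedBall.mem_iff.1 (mem_interior_iff_mem_nhds.1 hx₀)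
  have hx₀C : x₀ ∈ C := interior_subset hx₀
  have hM0 : 0 ≤ M := (norm_nonneg _).trans (hM x₀ hx₀C (by rwa [two_smul, add_sub_cancel_right]))
  refine ⟨M / r, fun f hf hfx₀ => f.opNorm_le_of_unit_norm (by positivity) fun y hy => ?_⟩
  -- `f (x₀ + v)` lies in the order interval between `0` and `2 x₀` as soon as `‖v‖ ≤ r`
  have hbound (v : V) (hv : ‖v‖ ≤ r) : ‖f (x₀ + v)‖ ≤ M := by
    have hmem (w : V) (hw : ‖w‖ ≤ r) : x₀ + w ∈ C :=
      hball (by simpa [dist_eq_norm] using hw)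
    refine hM _ (hf (hmem v hv)) ?_
    have : (2 : ℝ) • x₀ - f (x₀ + v) = (x₀ - f x₀) + ((x₀ - f x₀) + f (x₀ + -v)) := by
      rw [map_add, map_add, map_neg, two_smul]; abel
    rw [this]
    exact hadd hfx₀ (hadd hfx₀ (hf (hmem (-v) (by rwa [norm_neg]))))
  have h2 : (2 * r) * ‖f y‖ ≤ 2 * M := by
    have hry : ‖r • y‖ ≤ r := by simp [norm_smul, hy, abs_of_pos hr]
    calc (2 * r) * ‖f y‖ = ‖f (x₀ + r • y) - f (x₀ + -(r • y))‖ := by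
          rw [map_add, map_add, map_neg, map_smul, add_sub_add_left_eq_sub, sub_neg_eq_add,
            ← two_smul ℝ, smul_smul, norm_smul, Real.norm_of_nonneg (by positivity)]
      _ ≤ M + M := (norm_sub_le _ _).trans
          (add_le_add (hbound _ hry) (hbound _ (by rwa [norm_neg])))
      _ = 2 * M := by ring
  rw [le_div_iff₀ hr]
  linarith

end Cone

section BanachAlgebra

variable {A : Type*} [NormedRing A] [NormedAlgebra ℂ A] [CompleteSpace A]

theorem spectrum.tendsto_pow_nhds_zero_of_spectralRadius_lt_one {a : A}
    (ha : spectralRadius ℂ a < 1) : Tendsto (a ^ ·) atTop (𝓝 0) := by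
  obtain ⟨r, hρr, hr1⟩ := ENNReal.lt_iff_exists_nnreal_btwn.1 ha
  have hpow : ∀ᶠ n : ℕ in atTop, ‖a ^ n‖ ≤ (r : ℝ) ^ n := by
    filter_upwards [(pow_nnnorm_pow_one_div_tendsto_nhds_spectralRadius a).eventually
      (gt_mem_nhds hρr), eventually_ge_atTop 1] with n hn hn1
    rw [one_div, ← ENNReal.coe_rpow_of_nonneg _ (by positivity), ENNReal.coe_lt_coe,
      NNReal.rpow_inv_lt_iff (by positivity), NNReal.rpow_natCast] at hn
    exact_mod_cast hn.le
  exact squeeze_zero_norm' hpow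
    (tendsto_pow_atTop_nhds_zero_of_lt_one r.2 (by exact_mod_cast hr1))

theorem spectrum.re_le_of_norm_exp_smul_le {a : A} {K δ : ℝ}
    (ha : ∀ t : ℝ, 0 ≤ t → ‖exp ((t : ℂ) • a)‖ ≤ K * Real.exp (-(δ * t))) {μ : ℂ}
    (hμ : μ ∈ spectrum ℂ a) : μ.re ≤ -δ := by
  have hbound (t : ℝ) (ht : 0 < t) : Real.exp (t * (μ.re + δ)) ≤ K * ‖(1 : A)‖ := by
    have htμ : (t : ℂ) • μ ∈ spectrum ℂ ((t : ℂ) • a) :=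
      spectrum.smul_mem_smul_iff (r := Units.mk0 (t : ℂ) (by exact_mod_cast ht.ne')).2 hμ
    have := (spectrum.norm_le_norm_mul_of_mem (spectrum.exp_mem_exp _ htμ)).trans
      (mul_le_mul_of_nonneg_right (ha t ht.le) (norm_nonneg _))
    rw [← Complex.exp_eq_exp_ℂ, Complex.norm_exp, smul_eq_mul, Complex.re_ofReal_mul] at this
    rw [mul_add, Real.exp_add]
    calc Real.exp (t * μ.re) * Real.exp (t * δ)
        ≤ K * Real.exp (-(δ * t)) * ‖(1 : A)‖ * Real.exp (t * δ) := by gcongr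
      _ = K * ‖(1 : A)‖ := by
        rw [mul_right_comm, mul_assoc K, ← Real.exp_add, mul_comm δ, neg_add_cancel,
          Real.exp_zero, mul_one]
  by_contra! hlt
  have htends : Tendsto (fun t : ℝ => Real.exp (t * (μ.re + δ))) atTop atTop :=
    Real.tendsto_exp_atTop.comp (tendsto_id.atTop_mul_const (by linarith))
  obtain ⟨t, ht0, ht⟩ :=
    ((eventually_gt_atTop 0).and (htends.eventually_gt_atTop (K * ‖(1 : A)‖))).exists
  exact (hbound t ht0).not_gt ht

end BanachAlgebra

section MatrixExp

open scoped Norms.Operator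

variable {ι : Type*} [Fintype ι] [DecidableEq ι]

theorem Matrix.exp_mulVec_of_mulVec_eq_smul {M : Matrix ι ι ℂ} {v : ι → ℂ} {μ : ℂ}
    (h : M *ᵥ v = μ • v) : exp M *ᵥ v = Complex.exp μ • v := by
  have hpow (k : ℕ) : M ^ k *ᵥ v = μ ^ k • v := by
    induction k with
    | zero => simp
    | succ k ih => rw [pow_succ', ← mulVec_mulVec, ih, mulVec_smul, h, smul_smul, ← pow_succ]
  have hM := (exp_series_hasSum_exp' (𝕂 := ℂ) M).map (mulVec.addMonoidHomLeft v)
    (continuous_id.matrix_mulVec continuous_const)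
  have hμ := (exp_series_hasSum_exp' (𝕂 := ℂ) μ).smul_const v
  simp only [Function.comp_def, mulVec.addMonoidHomLeft, AddMonoidHom.coe_mk, ZeroHom.coe_mk,
    smul_mulVec, hpow, smul_smul] at hM
  rw [Complex.exp_eq_exp_ℂ]
  exact hM.unique (by simpa only [smul_eq_mul] using hμ)

theorem Matrix.spectrum_exp_subset (M : Matrix ι ι ℂ) :
    spectrum ℂ (exp M) ⊆ Complex.exp '' spectrum ℂ M := by
  intro ν hν
  rw [← spectrum_toLin', ← Module.End.hasEigenvalue_iff_mem_spectrum] at hν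
  -- `toLin' M` preserves the `ν`-eigenspace of `toLin' (exp M)`, so has an eigenvector there
  let W := Module.End.eigenspace (toLin' (exp M)) ν
  have hW : MapsTo (toLin' M) W W := Module.End.mapsTo_genEigenspace_of_comm
    ((Commute.refl M).exp_left.map toLinAlgEquiv') ν 1
  have : Nontrivial W := Submodule.nontrivial_iff_ne_bot.2 hν
  obtain ⟨μ, hμ⟩ := Module.End.exists_eigenvalue ((toLin' M).restrict hW)
  obtain ⟨⟨w, hwW⟩, hw⟩ := hμ.exists_hasEigenvector
  have hMw : M *ᵥ w = μ • w := congrArg Subtype.val hw.apply_eq_smul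
  have hw0 : w ≠ 0 := by simpa using hw.2
  refine ⟨μ, ?_, ?_⟩
  · rw [← spectrum_toLin', ← Module.End.hasEigenvalue_iff_mem_spectrum]
    exact Module.End.hasEigenvalue_of_hasEigenvector ⟨Module.End.mem_eigenspace_iff.2 hMw, hw0⟩
  · refine smul_left_injective ℂ hw0 (?_ : Complex.exp μ • w = ν • w)
    rw [← exp_mulVec_of_mulVec_eq_smul hMw]
    simpa using Module.End.mem_eigenspace_iff.1 hwW

theorem Matrix.linfty_opNorm_map_ofReal {m n : Type*} [Fintype m] [Fintype n]
    (M : Matrix m n ℝ) : ‖M.map ((↑) : ℝ → ℂ)‖ = ‖M‖ := by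
  simp [linfty_opNorm_def]

theorem Matrix.exp_map_ofReal (M : Matrix ι ι ℝ) :
    exp (M.map ((↑) : ℝ → ℂ)) = (exp M).map (↑) :=
  (map_exp Complex.ofRealHom.mapMatrix (continuous_id.matrix_map Complex.continuous_ofReal) M).symm

theorem Matrix.continuous_exp_smul_mulVec (M : Matrix ι ι ℝ) (x : ι → ℝ) :
    Continuous fun s : ℝ => exp (s • M) *ᵥ x :=
  (exp_continuous.comp (continuous_id.smul continuous_const)).matrix_mulVec continuous_const

theorem Matrix.integral_exp_smul_mulVec (M : Matrix ι ι ℝ) (x : ι → ℝ) (t : ℝ) :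
    ∫ s in (0 : ℝ)..t, exp (s • M) *ᵥ (M *ᵥ x) = exp (t • M) *ᵥ x - x := by
  have hderiv (s : ℝ) :
      HasDerivAt (fun u : ℝ => exp (u • M) *ᵥ x) (exp (s • M) *ᵥ (M *ᵥ x)) s := by
    rw [mulVec_mulVec]
    exact ((mulVec.addMonoidHomLeft x).toRealLinearMap
      (continuous_id.matrix_mulVec continuous_const)).hasFDerivAt.comp_hasDerivAt s
      (hasDerivAt_exp_smul_const (𝕂 := ℝ) M s)
  rw [intervalIntegral.integral_eq_sub_of_hasDerivAt (fun s _ => hderiv s)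
    ((continuous_exp_smul_mulVec M _).intervalIntegrable _ _)]
  simp

theorem Matrix.exp_smul_add_smul_one (B : Matrix ι ι ℝ) (δ t : ℝ) :
    exp (t • (B + δ • 1)) = Real.exp (t * δ) • exp (t • B) := by
  rw [smul_add, smul_smul, add_comm,
    Matrix.exp_add_of_commute _ _ ((Commute.one_left _).smul_left _),
    ← smul_one_mul (Real.exp _), ← Algebra.algebraMap_eq_smul_one,
    ← Algebra.algebraMap_eq_smul_one, Real.exp_eq_exp_ℝ]
  congr 1
  exact (map_exp _ (continuous_algebraMap ℝ (Matrix ι ι ℝ)) _).symm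

end MatrixExp

theorem Matrix.image_mulVec_interior {ι : Type*} [Fintype ι] [DecidableEq ι]
    {M : Matrix ι ι ℝ} (hM : IsUnit M) (S : Set (ι → ℝ)) :
    M.mulVec '' interior S = interior (M.mulVec '' S) :=
  have := M.invertibleOfIsUnitDet ((isUnit_iff_isUnit_det M).1 hM)
  (toLinearEquiv' M this).toContinuousLinearEquiv.toHomeomorph.image_interior S

section Stability

variable {n : ℕ}

theorem IsHurwitz.isUnit {A : Matrix (Fin n) (Fin n) ℝ} (hA : IsHurwitz A) : IsUnit A := by
  rw [isUnit_iff_isUnit_det, isUnit_iff_ne_zero]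
  intro hdet
  have h0 : (0 : ℂ) ∈ spectrum ℂ (A.map ((↑) : ℝ → ℂ)) := by
    rw [spectrum.zero_mem_iff, isUnit_iff_isUnit_det, isUnit_iff_ne_zero, not_not]
    have := RingHom.map_det Complex.ofRealHom A
    rw [hdet, map_zero] at this
    exact this.symm
  simpa using hA 0 h0

open scoped Norms.Operator in
theorem IsHurwitz.tendsto_exp_pow {A : Matrix (Fin n) (Fin n) ℝ} (hA : IsHurwitz A) :
    Tendsto (fun k : ℕ => exp A ^ k) atTop (𝓝 0) := by
  have hρ : spectralRadius ℂ (exp (A.map ((↑) : ℝ → ℂ))) < 1 := by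
    rcases subsingleton_or_nontrivial (Matrix (Fin n) (Fin n) ℂ) with _ | _
    · simp
    refine spectrum.spectralRadius_lt_of_forall_lt _ fun z hz => ?_
    obtain ⟨μ, hμ, rfl⟩ := spectrum_exp_subset _ hz
    rw [← NNReal.coe_lt_coe, coe_nnnorm, Complex.norm_exp, NNReal.coe_one, Real.exp_lt_one_iff]
    exact hA μ hμ
  have := spectrum.tendsto_pow_nhds_zero_of_spectralRadius_lt_one hρ
  rw [tendsto_zero_iff_norm_tendsto_zero] at this
  refine tendsto_zero_iff_norm_tendsto_zero.2 (this.congr fun k => ?_)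
  rw [← linfty_opNorm_map_ofReal]
  change _ = ‖Complex.ofRealHom.mapMatrix (exp A ^ k)‖
  rw [map_pow]
  exact congrArg (‖· ^ k‖) (exp_map_ofReal A)

open scoped Norms.Operator in
theorem isHurwitz_of_norm_exp_smul_le {B : Matrix (Fin n) (Fin n) ℝ} {K δ : ℝ} (hδ : 0 < δ)
    (hB : ∀ t : ℝ, 0 ≤ t → ‖exp (t • B)‖ ≤ K * Real.exp (-(δ * t))) : IsHurwitz B := by
  refine fun μ hμ => (spectrum.re_le_of_norm_exp_smul_le (K := K) (fun t ht => ?_) hμ).trans_lt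
    (neg_neg_of_pos hδ)
  have : (t : ℂ) • B.map ((↑) : ℝ → ℂ) = (t • B).map (↑) := by ext; simp
  calc ‖exp ((t : ℂ) • B.map ((↑) : ℝ → ℂ))‖ = ‖(exp (t • B)).map ((↑) : ℝ → ℂ)‖ := by
        rw [this]; exact congrArg _ (exp_map_ofReal _)
    _ ≤ K * Real.exp (-(δ * t)) := (linfty_opNorm_map_ofReal _).trans_le (hB t ht)

end Stability

section ConeInvariant

variable {n : ℕ} {C : Set (Fin n → ℝ)}

theorem memM.add_smul_one {B : Matrix (Fin n) (Fin n) ℝ} (hB : memM C B)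
    (hcone : ∀ x ∈ C, ∀ t : ℝ, 0 < t → t • x ∈ C) (δ : ℝ) : memM C (B + δ • 1) := by
  intro t ht x hx
  rw [exp_smul_add_smul_one, smul_mulVec]
  exact hcone _ (hB t ht x hx) _ (Real.exp_pos _)

theorem memM.sub_exp_smul_mulVec_mem {B : Matrix (Fin n) (Fin n) ℝ} (hB : memM C B)
    (hclosed : IsClosed C) (hconv : Convex ℝ C) (hcone : ∀ x ∈ C, ∀ t : ℝ, 0 < t → t • x ∈ C)
    (h0 : (0 : Fin n → ℝ) ∈ C) {x : Fin n → ℝ} (hx : -(B *ᵥ x) ∈ C) {t : ℝ} (ht : 0 ≤ t) :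
    x - exp (t • B) *ᵥ x ∈ C := by
  have : x - exp (t • B) *ᵥ x = ∫ s in (0 : ℝ)..t, exp (s • B) *ᵥ -(B *ᵥ x) := by
    simp only [mulVec_neg, intervalIntegral.integral_neg, integral_exp_smul_mulVec, neg_sub]
  rw [this]
  exact intervalIntegral_mem_of_convex_cone hclosed hconv hcone h0
    (continuous_exp_smul_mulVec _ _) ht fun s hs => hB s hs.1 _ hx

theorem memM.neg_inv_mulVec_mem {A : Matrix (Fin n) (Fin n) ℝ} (hA : memM C A)
    (hAh : IsHurwitz A) (hclosed : IsClosed C) (hconv : Convex ℝ C)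
    (hcone : ∀ x ∈ C, ∀ t : ℝ, 0 < t → t • x ∈ C) (h0 : (0 : Fin n → ℝ) ∈ C) {y : Fin n → ℝ}
    (hy : y ∈ C) : -(A⁻¹ *ᵥ y) ∈ C := by
  set p := -(A⁻¹ *ᵥ y)
  have hAp : -(A *ᵥ p) = y := by
    rw [mulVec_neg, neg_neg, mulVec_mulVec,
      mul_nonsing_inv _ ((isUnit_iff_isUnit_det A).1 hAh.isUnit), one_mulVec]
  have hlim : Tendsto (fun k : ℕ => p - exp ((k : ℝ) • A) *ᵥ p) atTop (𝓝 p) := by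
    have := tendsto_const_nhds (x := p) |>.sub
      (((continuous_id.matrix_mulVec (continuous_const (y := p))).tendsto 0).comp
        hAh.tendsto_exp_pow)
    have hk (k : ℕ) : exp ((k : ℝ) • A) = exp A ^ k := by
      rw [Nat.cast_smul_eq_nsmul, Matrix.exp_nsmul]
    simpa only [hk, Function.comp_def, id, zero_mulVec, sub_zero] using this
  exact hclosed.mem_of_tendsto hlim (.of_forall fun k =>
    hA.sub_exp_smul_mulVec_mem hclosed hconv hcone h0 (hAp ▸ hy) k.cast_nonneg)

theorem memM.exists_mem_interior_mulVec_eq_neg {A : Matrix (Fin n) (Fin n) ℝ} (hA : memM C A)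
    (hAh : IsHurwitz A) (hclosed : IsClosed C) (hconv : Convex ℝ C)
    (hcone : ∀ x ∈ C, ∀ t : ℝ, 0 < t → t • x ∈ C) (h0 : (0 : Fin n → ℝ) ∈ C) {u : Fin n → ℝ}
    (hu : u ∈ interior C) : ∃ x ∈ interior C, A *ᵥ x = -u := by
  have hdet := (isUnit_iff_isUnit_det A).1 hAh.isUnit
  have hunit : IsUnit (-A⁻¹) := (isUnit_nonsing_inv_iff.2 hAh.isUnit).neg
  have hmaps : (-A⁻¹).mulVec '' interior C ⊆ interior C := by
    rw [image_mulVec_interior hunit]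
    refine interior_mono (image_subset_iff.2 fun y hy => ?_)
    simpa [neg_mulVec] using hA.neg_inv_mulVec_mem hAh hclosed hconv hcone h0 hy
  refine ⟨_, hmaps ⟨u, hu, rfl⟩, ?_⟩
  rw [neg_mulVec, mulVec_neg, mulVec_mulVec, mul_nonsing_inv _ hdet, one_mulVec]

open scoped Norms.Operator in
theorem memM.isHurwitz_of_mem_interior {B : Matrix (Fin n) (Fin n) ℝ} (hB : memM C B)
    (hclosed : IsClosed C) (hconv : Convex ℝ C) (hcone : ∀ x ∈ C, ∀ t : ℝ, 0 < t → t • x ∈ C)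
    (hpointed : C ∩ (-C) = {0}) {x₀ : Fin n → ℝ} (hx₀ : x₀ ∈ interior C)
    (hBx₀ : -(B *ᵥ x₀) ∈ interior C) : IsHurwitz B := by
  have h0 : (0 : Fin n → ℝ) ∈ C := (hpointed.symm.subset rfl).1
  obtain ⟨δ, hδC, hδ⟩ : ∃ δ : ℝ, -(B *ᵥ x₀) - δ • x₀ ∈ interior C ∧ 0 < δ := by
    have hcont : Tendsto (fun δ : ℝ => -(B *ᵥ x₀) - δ • x₀) (𝓝 0) (𝓝 (-(B *ᵥ x₀))) :=
      Continuous.tendsto' (by fun_prop) 0 _ (by simp)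
    have hev : ∀ᶠ δ in 𝓝[>] (0 : ℝ), -(B *ᵥ x₀) - δ • x₀ ∈ interior C :=
      (hcont.mono_left nhdsWithin_le_nhds).eventually (isOpen_interior.mem_nhds hBx₀)
    exact (hev.and self_mem_nhdsWithin).exists
  have hBδ := hB.add_smul_one hcone δ
  obtain ⟨K, hK⟩ := exists_opNorm_le_of_mapsTo_of_sub_mem hclosed hconv hcone hpointed hx₀
  refine isHurwitz_of_norm_exp_smul_le hδ (K := K) fun t ht => ?_
  have hsub : x₀ - exp (t • (B + δ • 1)) *ᵥ x₀ ∈ C :=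
    hBδ.sub_exp_smul_mulVec_mem hclosed hconv hcone h0
      (by rw [add_mulVec, smul_mulVec, one_mulVec, neg_add, ← sub_eq_add_neg]
          exact interior_subset hδC) ht
  have := hK (ContinuousLinearMap.mk (mulVecLin (exp (t • (B + δ • 1)))))
    (fun x hx => hBδ t ht x hx) hsub
  rw [← linfty_opNorm_eq_opNorm, exp_smul_add_smul_one, norm_smul, Real.norm_of_nonneg
    (Real.exp_pos _).le, ← le_div_iff₀' (Real.exp_pos _), div_eq_mul_inv, ← Real.exp_neg,
    mul_comm t] at this
  exact this

end ConeInvariant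

/-- Invariance of stability under automorphisms of a proper cone:
if `A ∈ M(C)` is Hurwitz, `D₁, D₂` are automorphisms of `C`, and `D₁AD₂ ∈ M(C)`,
then `D₁AD₂` is Hurwitz. -/
theorem hurwitz_of_aut_mul_aut {n : ℕ} (C : Set (Fin n → ℝ))
    (hclosed : IsClosed C) (hconv : Convex ℝ C)
    (hcone : ∀ x ∈ C, ∀ t : ℝ, 0 < t → t • x ∈ C)
    (hpointed : C ∩ (-C) = {0})
    (hint : (interior C).Nonempty)
    (A D₁ D₂ : Matrix (Fin n) (Fin n) ℝ)
    (hA : memM C A) (hAh : IsHurwitz A)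
    (hD₁ : IsUnit D₁) (hD₁C : D₁.mulVec '' C = C)
    (hD₂ : IsUnit D₂) (hD₂C : D₂.mulVec '' C = C)
    (hDAD : memM C (D₁ * A * D₂)) :
    IsHurwitz (D₁ * A * D₂) := by
  have h0 : (0 : Fin n → ℝ) ∈ C := (hpointed.symm.subset rfl).1
  obtain ⟨e, he⟩ := hint
  obtain ⟨u, hu, rfl⟩ : e ∈ D₁.mulVec '' interior C := by rwa [image_mulVec_interior hD₁, hD₁C]
  obtain ⟨x, hx, hAx⟩ := hA.exists_mem_interior_mulVec_eq_neg hAh hclosed hconv hcone h0 hu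
  obtain ⟨x₀, hx₀, rfl⟩ : x ∈ D₂.mulVec '' interior C := by rwa [image_mulVec_interior hD₂, hD₂C]
  refine hDAD.isHurwitz_of_mem_interior hclosed hconv hcone hpointed hx₀ ?_
  rwa [← mulVec_mulVec, ← mulVec_mulVec, hAx, mulVec_neg, neg_neg]
end

section
/- Let n ≥ 2, let α ∈ ℝ, let B₁ be an (n−1)×(n−1) real skew-symmetric matrix, and let b ∈ ℝ^{n−1}. Let B be the n×n block matrix with upper-left block B₁, upper-right block b, lower-left block bᵀ, and lower-right entry 0. Then the matrix H = exp(α·I_n + B) maps the ice-cream cone K_n onto K_n. -/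
/-!
Let `η = diag(1, …, 1, -1)`. The block matrix `B` satisfies `Bᵀη = -ηB`, so `exp B`
preserves the Lorentz form `x ⬝ᵥ η x` and hence maps the cone `K` into `K ∪ -K`. It maps `K`
into `K` because it is the square of `C = exp (B / 2)`, again an `η`-isometry, and for such
`C` Cauchy–Schwarz on its last row and column (both of squared length `Cₙₙ² - 1`) gives
`(C²)ₙₙ ≥ Cₙₙ² - (Cₙₙ² - 1) = 1`. The scalar part contributes the factor `e^α > 0`, and
the inverse `exp (-αI - B)` is of the same form, which gives surjectivity.
-/

open Matrix

/-- The ice-cream cone `K_{m+1} ⊆ ℝ^{m+1}`. -/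
def iceCream (m : ℕ) : Set (Fin (m + 1) → ℝ) :=
  {x | (∑ i : Fin m, x i.castSucc ^ 2) ≤ x (Fin.last m) ^ 2 ∧ 0 ≤ x (Fin.last m)}

open NormedSpace

section Isometry

variable {n : Type*} [Fintype n] {J A X : Matrix n n ℝ}

theorem dotProduct_mulVec_mulVec_eq (h : Aᵀ * J * A = J) (x : n → ℝ) :
    A *ᵥ x ⬝ᵥ J *ᵥ (A *ᵥ x) = x ⬝ᵥ J *ᵥ x := by
  calc A *ᵥ x ⬝ᵥ J *ᵥ (A *ᵥ x) = x ⬝ᵥ (Aᵀ * J * A) *ᵥ x := by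
        rw [← mulVec_mulVec, ← mulVec_mulVec, dotProduct_mulVec x, vecMul_transpose]
    _ = x ⬝ᵥ J *ᵥ x := by rw [h]

variable [DecidableEq n]

theorem transpose_exp_mul_mul_exp (hJ : IsUnit J) (hX : Xᵀ * J = -(J * X)) :
    (exp X)ᵀ * J * exp X = J := by
  have hdet := (Matrix.isUnit_iff_isUnit_det J).mp hJ
  have hconj : Xᵀ = J * -X * J⁻¹ := by
    rw [mul_neg, ← hX, Matrix.mul_nonsing_inv_cancel_right _ _ hdet]
  have hexp := (Matrix.isUnit_iff_isUnit_det _).mp (Matrix.isUnit_exp X)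
  rw [← Matrix.exp_transpose, hconj, Matrix.exp_conj _ _ hJ, Matrix.exp_neg,
    Matrix.nonsing_inv_mul_cancel_right _ _ hdet, Matrix.mul_assoc,
    Matrix.nonsing_inv_mul _ hexp, Matrix.mul_one]

theorem mul_mul_transpose_eq_of_transpose_mul_mul_eq (hJ : J * J = 1) (h : Aᵀ * J * A = J) :
    A * J * Aᵀ = J := by
  have hleft : (J * Aᵀ * J) * A = 1 := by
    rw [Matrix.mul_assoc J, Matrix.mul_assoc J, h, hJ]
  have hright : A * (J * Aᵀ * J) = 1 := mul_eq_one_comm.mp hleft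
  calc A * J * Aᵀ = A * (J * Aᵀ * J) * J := by
        simp only [Matrix.mul_assoc, hJ, Matrix.mul_one]
    _ = J := by rw [hright, Matrix.one_mul]

end Isometry

section Minkowski

variable {m : ℕ}

def minkowski (m : ℕ) : Matrix (Fin (m + 1)) (Fin (m + 1)) ℝ :=
  diagonal (Fin.lastCases (-1) fun _ => 1)

theorem minkowski_mul_self : minkowski m * minkowski m = 1 := by
  rw [minkowski, diagonal_mul_diagonal, ← diagonal_one]
  congr 1
  ext i
  induction i using Fin.lastCases <;> simp

theorem isUnit_minkowski : IsUnit (minkowski m) :=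
  IsUnit.of_mul_eq_one _ minkowski_mul_self

theorem dotProduct_minkowski_mulVec (x : Fin (m + 1) → ℝ) :
    x ⬝ᵥ minkowski m *ᵥ x = ∑ i : Fin m, x i.castSucc ^ 2 - x (Fin.last m) ^ 2 := by
  simp [minkowski, dotProduct, mulVec_diagonal, Fin.sum_univ_castSucc, sq]
  ring

variable {A : Matrix (Fin (m + 1)) (Fin (m + 1)) ℝ}

theorem sum_sq_col_last (h : Aᵀ * minkowski m * A = minkowski m) :
    ∑ i : Fin m, A i.castSucc (Fin.last m) ^ 2 = A (Fin.last m) (Fin.last m) ^ 2 - 1 := by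
  have hquad := dotProduct_mulVec_mulVec_eq h (Pi.single (Fin.last m) 1)
  rw [mulVec_single_one, dotProduct_minkowski_mulVec, dotProduct_minkowski_mulVec] at hquad
  simp [Fin.castSucc_ne_last] at hquad
  linarith

theorem sum_sq_row_last (h : Aᵀ * minkowski m * A = minkowski m) :
    ∑ j : Fin m, A (Fin.last m) j.castSucc ^ 2 = A (Fin.last m) (Fin.last m) ^ 2 - 1 := by
  have hT : Aᵀᵀ * minkowski m * Aᵀ = minkowski m := by
    rw [transpose_transpose]
    exact mul_mul_transpose_eq_of_transpose_mul_mul_eq minkowski_mul_self h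
  simpa using sum_sq_col_last hT

end Minkowski

section Cone

variable {m : ℕ} {A : Matrix (Fin (m + 1)) (Fin (m + 1)) ℝ}

theorem one_le_mul_self_last_last (h : Aᵀ * minkowski m * A = minkowski m) :
    1 ≤ (A * A) (Fin.last m) (Fin.last m) := by
  have hrow := sum_sq_row_last h
  have hcol := sum_sq_col_last h
  have hcs := Finset.sum_mul_sq_le_sq_mul_sq Finset.univ
    (fun k : Fin m => A (Fin.last m) k.castSucc) (fun k => A k.castSucc (Fin.last m))
  rw [hrow, hcol] at hcs
  have hnonneg : 0 ≤ A (Fin.last m) (Fin.last m) ^ 2 - 1 :=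
    hrow ▸ Finset.sum_nonneg fun k _ => sq_nonneg _
  rw [mul_apply, Fin.sum_univ_castSucc]
  nlinarith

theorem mulVec_mem_iceCream (h : Aᵀ * minkowski m * A = minkowski m)
    (hA : 0 ≤ A (Fin.last m) (Fin.last m)) {x : Fin (m + 1) → ℝ} (hx : x ∈ iceCream m) :
    A *ᵥ x ∈ iceCream m := by
  obtain ⟨hx_sq, hx_last⟩ := hx
  have hquad := dotProduct_mulVec_mulVec_eq h x
  rw [dotProduct_minkowski_mulVec, dotProduct_minkowski_mulVec] at hquad
  refine ⟨by linarith, ?_⟩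
  have hrow := sum_sq_row_last h
  have hcs := Finset.sum_mul_sq_le_sq_mul_sq Finset.univ
    (fun k : Fin m => A (Fin.last m) k.castSucc) (fun k => x k.castSucc)
  rw [hrow] at hcs
  have hnonneg : 0 ≤ A (Fin.last m) (Fin.last m) ^ 2 - 1 :=
    hrow ▸ Finset.sum_nonneg fun k _ => sq_nonneg _
  have hspace := mul_le_mul_of_nonneg_left hx_sq hnonneg
  rw [mulVec, dotProduct, Fin.sum_univ_castSucc]
  nlinarith [mul_nonneg hA hx_last]

theorem smul_mem_iceCream {c : ℝ} (hc : 0 ≤ c) {x : Fin (m + 1) → ℝ}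
    (hx : x ∈ iceCream m) : c • x ∈ iceCream m := by
  obtain ⟨hx_sq, hx_last⟩ := hx
  refine ⟨?_, mul_nonneg hc hx_last⟩
  simp only [Pi.smul_apply, smul_eq_mul, mul_pow, ← Finset.mul_sum]
  exact mul_le_mul_of_nonneg_left hx_sq (sq_nonneg c)

end Cone

section Exp

variable {m : ℕ} {X : Matrix (Fin (m + 1)) (Fin (m + 1)) ℝ}

theorem exp_mulVec_mem_iceCream (hX : Xᵀ * minkowski m = -(minkowski m * X))
    {x : Fin (m + 1) → ℝ} (hx : x ∈ iceCream m) : exp X *ᵥ x ∈ iceCream m := by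
  have hhalf : ((2⁻¹ : ℝ) • X)ᵀ * minkowski m = -(minkowski m * ((2⁻¹ : ℝ) • X)) := by
    rw [transpose_smul, Matrix.smul_mul, hX, Matrix.mul_smul, smul_neg]
  have hsq : exp ((2⁻¹ : ℝ) • X) * exp ((2⁻¹ : ℝ) • X) = exp X := by
    rw [← Matrix.exp_add_of_commute _ _ (Commute.refl _), ← add_smul]
    norm_num
  refine mulVec_mem_iceCream (transpose_exp_mul_mul_exp isUnit_minkowski hX) ?_ hx
  rw [← hsq]
  exact zero_le_one.trans
    (one_le_mul_self_last_last (transpose_exp_mul_mul_exp isUnit_minkowski hhalf))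

theorem exp_smul_one_s14 {n : Type*} [Fintype n] [DecidableEq n] (α : ℝ) :
    exp (α • (1 : Matrix n n ℝ)) = Real.exp α • 1 := by
  rw [smul_one_eq_diagonal, smul_one_eq_diagonal, Matrix.exp_diagonal, Real.exp_eq_exp_ℝ,
    Pi.exp_def]

theorem exp_smul_one_add_mulVec_mem_iceCream (α : ℝ)
    (hX : Xᵀ * minkowski m = -(minkowski m * X)) {x : Fin (m + 1) → ℝ}
    (hx : x ∈ iceCream m) : exp (α • 1 + X) *ᵥ x ∈ iceCream m := by
  rw [Matrix.exp_add_of_commute _ _ ((Commute.one_left X).smul_left α), exp_smul_one_s14,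
    smul_mul_assoc, Matrix.one_mul, smul_mulVec]
  exact smul_mem_iceCream (Real.exp_pos α).le (exp_mulVec_mem_iceCream hX hx)

theorem image_exp_smul_one_add_mulVec_iceCream (α : ℝ)
    (hX : Xᵀ * minkowski m = -(minkowski m * X)) :
    (exp (α • 1 + X)).mulVec '' iceCream m = iceCream m := by
  have hX' : (-X)ᵀ * minkowski m = -(minkowski m * -X) := by
    rw [transpose_neg, Matrix.neg_mul, hX, Matrix.mul_neg]
  have hneg : -(α • 1 + X) = (-α) • 1 + -X := by rw [neg_add, neg_smul]
  have hunit : IsUnit (exp (α • 1 + X)).det :=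
    (Matrix.isUnit_iff_isUnit_det _).mp (Matrix.isUnit_exp _)
  have hinv : Set.InvOn (exp (-(α • 1 + X))).mulVec (exp (α • 1 + X)).mulVec
      (iceCream m) (iceCream m) := by
    constructor <;> intro x _
    · rw [mulVec_mulVec, Matrix.exp_neg, Matrix.nonsing_inv_mul _ hunit, one_mulVec]
    · rw [mulVec_mulVec, Matrix.exp_neg, Matrix.mul_nonsing_inv _ hunit, one_mulVec]
  refine (hinv.bijOn (fun x hx => ?_) (fun x hx => ?_)).image_eq
  · exact exp_smul_one_add_mulVec_mem_iceCream α hX hx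
  · rw [hneg]
    exact exp_smul_one_add_mulVec_mem_iceCream (-α) hX' hx

end Exp

def lorentzGenerator {m : ℕ} (B₁ : Matrix (Fin m) (Fin m) ℝ) (b : Fin m → ℝ) :
    Matrix (Fin (m + 1)) (Fin (m + 1)) ℝ :=
  reindex finSumFinEquiv finSumFinEquiv
    (fromBlocks B₁ (of fun i (_ : Fin 1) => b i) (of fun (_ : Fin 1) j => b j) 0)

theorem lorentzGenerator_transpose_mul_minkowski {m : ℕ} {B₁ : Matrix (Fin m) (Fin m) ℝ}
    (hB₁ : B₁ᵀ = -B₁) (b : Fin m → ℝ) :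
    (lorentzGenerator B₁ b)ᵀ * minkowski m = -(minkowski m * lorentzGenerator B₁ b) := by
  ext i j
  induction i using Fin.lastCases <;> induction j using Fin.lastCases <;>
    simp [minkowski, lorentzGenerator, finSumFinEquiv_symm_last]
  exact congrFun₂ hB₁ _ _

theorem exp_mem_aut_iceCream_general {m : ℕ} (α : ℝ)
    (B₁ : Matrix (Fin m) (Fin m) ℝ) (hB₁ : B₁ᵀ = -B₁) (b : Fin m → ℝ) :
    (NormedSpace.exp
        (α • (1 : Matrix (Fin (m + 1)) (Fin (m + 1)) ℝ) +
          Matrix.reindex finSumFinEquiv finSumFinEquiv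
            (Matrix.fromBlocks B₁ (Matrix.of fun i (_ : Fin 1) => b i)
              (Matrix.of fun (_ : Fin 1) j => b j) 0))).mulVec '' iceCream m
      = iceCream m :=
  image_exp_smul_one_add_mulVec_iceCream α (lorentzGenerator_transpose_mul_minkowski hB₁ b)

/-- For `α ∈ ℝ`, `B₁` skew-symmetric of size `m = n - 1`, and `b ∈ ℝ^{n-1}`, the matrix
`exp(αI + B)` with `B = [[B₁, b], [bᵀ, 0]]` maps the ice-cream cone `K_n` onto itself. -/
theorem exp_mem_aut_iceCream {m : ℕ} (hm : 1 ≤ m) (α : ℝ)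
    (B₁ : Matrix (Fin m) (Fin m) ℝ) (hB₁ : B₁ᵀ = -B₁) (b : Fin m → ℝ) :
    (NormedSpace.exp
        (α • (1 : Matrix (Fin (m + 1)) (Fin (m + 1)) ℝ) +
          Matrix.reindex finSumFinEquiv finSumFinEquiv
            (Matrix.fromBlocks B₁ (Matrix.of fun i (_ : Fin 1) => b i)
              (Matrix.of fun (_ : Fin 1) j => b j) 0))).mulVec '' iceCream m
      = iceCream m :=
  exp_mem_aut_iceCream_general α B₁ hB₁ b
end

section
/- Let A be a real n×n Metzler matrix. Then the following statements are equivalent: (1) A is Hurwitz; (2) A is invertible and all entries of A⁻¹ are nonpositive; (3) there exists z ∈ ℝⁿ with all entries strictly positive such that −Az has all entries strictly positive; (4) there exists ξ ∈ ℝⁿ with all entries strictly positive such that −Aᵀξ has all entries strictly positive. -/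
open Matrix

/-!
Let `z > 0` with `A z < 0`. If `x` has a positive entry, let `t = maxⱼ xⱼ / zⱼ > 0` be attained
at `k`; then `x ≤ t z` with equality at `k`, so, the off-diagonal entries of `A` being
nonnegative, `(A x)ₖ ≤ t (A z)ₖ < 0` while `xₖ > 0`. Applied to `±` a kernel vector and to the
columns of `A⁻¹` this gives (3) ⇒ (2); applied to the moduli `|v|` of an eigenvector for `μ`,
which satisfy `Re μ · |v| ≤ A |v|`, it gives (3) ⇒ (1). Conversely, if `A` is Hurwitz, then for
small `t > 0` the matrix `P = 1 + t A` is nonnegative with spectrum in the open unit disc, so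
`Pᵐ → 0` by Gelfand's formula, and for large `m ≥ 1` the vector `z = ∑_{k<m} Pᵏ 1` satisfies
`P z - z = Pᵐ 1 - 1 < 0`, i.e. `A z < 0`. Statement (4) is (3) for `Aᵀ`, which has the same
spectrum.
-/

open Filter Topology

theorem tendsto_pow_atTop_nhds_zero_of_spectralRadius_lt_one {A : Type*} [NormedRing A]
    [NormedAlgebra ℂ A] [CompleteSpace A] {a : A} (h : spectralRadius ℂ a < 1) :
    Tendsto (a ^ ·) atTop (𝓝 0) := by
  obtain ⟨r, hρr, hr1⟩ := ENNReal.lt_iff_exists_nnreal_btwn.mp h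
  have hgelfand := spectrum.pow_nnnorm_pow_one_div_tendsto_nhds_spectralRadius a
  have hbound : ∀ᶠ m : ℕ in atTop, ‖a ^ m‖ ≤ (r : ℝ) ^ m := by
    filter_upwards [hgelfand.eventually_lt_const hρr, eventually_ge_atTop 1] with m hm hm1
    have hm0 : (0 : ℝ) < m := by exact_mod_cast hm1
    rw [one_div, ← ENNReal.coe_rpow_of_nonneg _ (by positivity), ENNReal.coe_lt_coe,
      NNReal.rpow_inv_lt_iff hm0, NNReal.rpow_natCast] at hm
    exact_mod_cast hm.le
  exact squeeze_zero_norm' hbound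
    (tendsto_pow_atTop_nhds_zero_of_lt_one r.2 (by exact_mod_cast hr1))

theorem Complex.eventually_norm_one_add_mul_lt_one {μ : ℂ} (hμ : μ.re < 0) :
    ∀ᶠ t : ℝ in 𝓝[>] 0, ‖1 + t * μ‖ < 1 := by
  have hlim : Tendsto (fun t : ℝ => 2 * μ.re + t * ‖μ‖ ^ 2) (𝓝[>] 0) (𝓝 (2 * μ.re)) := by
    have hcont : Continuous fun t : ℝ => 2 * μ.re + t * ‖μ‖ ^ 2 := by fun_prop
    simpa using (hcont.tendsto 0).mono_left nhdsWithin_le_nhds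
  filter_upwards [hlim.eventually_lt_const (by linarith), self_mem_nhdsWithin]
    with t ht (htpos : 0 < t)
  have hsq : ‖1 + t * μ‖ ^ 2 = 1 + t * (2 * μ.re + t * ‖μ‖ ^ 2) := by
    simp only [Complex.sq_norm, Complex.normSq_apply, add_re, one_re, mul_re, ofReal_re,
      ofReal_im, zero_mul, sub_zero, add_im, one_im, mul_im, add_zero, zero_add]
    ring
  rw [← sq_lt_one_iff₀ (norm_nonneg _), hsq]
  nlinarith

namespace Matrix

def IsMetzler {ι : Type*} (A : Matrix ι ι ℝ) : Prop := ∀ i j, i ≠ j → 0 ≤ A i j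

theorem IsMetzler.transpose {ι : Type*} {A : Matrix ι ι ℝ} (hA : A.IsMetzler) : Aᵀ.IsMetzler :=
  fun i j hij => hA j i hij.symm

variable {ι : Type*} [Fintype ι]

theorem spectrum_transpose {R : Type*} [CommRing R] [DecidableEq ι] (A : Matrix ι ι R) :
    spectrum R Aᵀ = spectrum R A := by
  ext μ
  have h : (algebraMap R (Matrix ι ι R) μ - A)ᵀ = algebraMap R _ μ - Aᵀ := by
    simp [algebraMap_eq_diagonal]
  rw [spectrum.mem_iff, spectrum.mem_iff, ← h, isUnit_transpose]

theorem exists_mulVec_eq_smul_of_mem_spectrum {K : Type*} [Field K] [DecidableEq ι]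
    {A : Matrix ι ι K} {μ : K} (hμ : μ ∈ spectrum K A) : ∃ v ≠ 0, A *ᵥ v = μ • v := by
  rw [← spectrum_toLin'] at hμ
  obtain ⟨v, hv⟩ := (Module.End.hasEigenvalue_iff_mem_spectrum.mpr hμ).exists_hasEigenvector
  exact ⟨v, hv.2, by simpa using hv.apply_eq_smul⟩

theorem map_ofReal_pow [DecidableEq ι] (P : Matrix ι ι ℝ) (m : ℕ) :
    (P ^ m).map ((↑) : ℝ → ℂ) = P.map (↑) ^ m :=
  map_pow Complex.ofRealHom.mapMatrix P m

theorem mem_spectrum_map_ofReal_one_add_smul [DecidableEq ι] {A : Matrix ι ι ℝ} {t : ℝ}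
    (ht : t ≠ 0) {ν : ℂ} (hν : ν ∈ spectrum ℂ ((1 + t • A).map ((↑) : ℝ → ℂ))) :
    ∃ μ ∈ spectrum ℂ (A.map ((↑) : ℝ → ℂ)), ν = 1 + t * μ := by
  let u : ℂˣ := Units.mk0 t (by exact_mod_cast ht)
  have hmap : (1 + t • A).map ((↑) : ℝ → ℂ) = algebraMap ℂ _ 1 + u • A.map (↑) := by
    ext i j
    by_cases h : i = j <;> simp [u, h]
  rw [hmap, ← spectrum.singleton_add_eq, spectrum.unit_smul_eq_smul, Set.singleton_add] at hν
  obtain ⟨_, ⟨μ, hμ, rfl⟩, rfl⟩ := hν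
  exact ⟨μ, hμ, rfl⟩

theorem tendsto_pow_atTop_nhds_zero_of_spectrum_map_ofReal [DecidableEq ι] {P : Matrix ι ι ℝ}
    (hP : ∀ ν ∈ spectrum ℂ (P.map ((↑) : ℝ → ℂ)), ‖ν‖ < 1) :
    Tendsto (P ^ ·) atTop (𝓝 0) := by
  cases isEmpty_or_nonempty ι
  · simpa only [Subsingleton.elim _ (0 : Matrix ι ι ℝ)] using tendsto_const_nhds
  have hc : Tendsto (P.map ((↑) : ℝ → ℂ) ^ ·) atTop (𝓝 0) := by
    let := Matrix.linftyOpNormedRing (n := ι) (α := ℂ)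
    let := Matrix.linftyOpNormedAlgebra (R := ℂ) (n := ι) (α := ℂ)
    exact tendsto_pow_atTop_nhds_zero_of_spectralRadius_lt_one <| by
      exact_mod_cast spectrum.spectralRadius_lt_of_forall_lt _ (r := 1) fun ν hν => by
        exact_mod_cast hP ν hν
  have hre : Continuous fun M : Matrix ι ι ℂ => M.map Complex.re :=
    continuous_id.matrix_map Complex.continuous_re
  have hcancel : ∀ M : Matrix ι ι ℝ, (M.map ((↑) : ℝ → ℂ)).map Complex.re = M := fun M => by
    ext; simp
  simpa [Function.comp_def, ← map_ofReal_pow, hcancel] using (hre.tendsto 0).comp hc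

theorem exists_pos_mulVec_lt_of_tendsto_pow [DecidableEq ι] {P : Matrix ι ι ℝ}
    (hP : ∀ i j, 0 ≤ P i j) (hlim : Tendsto (P ^ ·) atTop (𝓝 0)) :
    ∃ z : ι → ℝ, (∀ i, 0 < z i) ∧ ∀ i, (P *ᵥ z) i < z i := by
  have hrow : ∀ᶠ m in atTop, ∀ i, (P ^ m *ᵥ 1) i < 1 := by
    have hvec : Tendsto (fun m => P ^ m *ᵥ 1) atTop (𝓝 0) := by
      simpa [Function.comp_def] using
        ((continuous_id.matrix_mulVec continuous_const).tendsto 0).comp hlim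
    exact eventually_all.mpr fun i =>
      (tendsto_pi_nhds.mp hvec i).eventually_lt_const zero_lt_one
  obtain ⟨m, hm, hm1⟩ := (hrow.and (eventually_ge_atTop 1)).exists
  set S := ∑ k ∈ Finset.range m, P ^ k
  have hterm : ∀ k i, 0 ≤ (P ^ k *ᵥ 1) i := fun k i =>
    Finset.sum_nonneg fun j _ => mul_nonneg (pow_apply_nonneg hP k i j) zero_le_one
  have htel : P *ᵥ (S *ᵥ 1) - S *ᵥ 1 = P ^ m *ᵥ 1 - 1 :=
    calc P *ᵥ (S *ᵥ 1) - S *ᵥ 1 = ((P - 1) * S) *ᵥ 1 := by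
          rw [sub_mul, sub_mulVec, one_mul, mulVec_mulVec]
      _ = P ^ m *ᵥ 1 - 1 := by rw [mul_geom_sum, sub_mulVec, one_mulVec]
  refine ⟨S *ᵥ 1, fun i => ?_, fun i => ?_⟩
  · rw [sum_mulVec, Finset.sum_apply]
    calc (0 : ℝ) < (P ^ 0 *ᵥ 1) i := by simp
      _ ≤ ∑ k ∈ Finset.range m, (P ^ k *ᵥ 1) i :=
        Finset.single_le_sum (fun k _ => hterm k i) (Finset.mem_range.mpr hm1)
  · have := congrFun htel i
    simp only [Pi.sub_apply, Pi.one_apply] at this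
    linarith [hm i]

theorem exists_pos_mulVec_neg_of_inv_apply_nonpos [DecidableEq ι] {A : Matrix ι ι ℝ}
    (hA : IsUnit A) (hinv : ∀ i j, A⁻¹ i j ≤ 0) :
    ∃ z : ι → ℝ, (∀ i, 0 < z i) ∧ ∀ i, (A *ᵥ z) i < 0 := by
  have hdet : IsUnit A.det := (isUnit_iff_isUnit_det A).mp hA
  refine ⟨-(A⁻¹ *ᵥ 1), fun i => ?_, fun i => ?_⟩
  · obtain ⟨j, hj⟩ : ∃ j, A⁻¹ i j ≠ 0 := by
      by_contra! h
      exact (isUnit_nonsing_inv_det A hdet).ne_zero (det_eq_zero_of_row_eq_zero i h)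
    have hsum : ∑ j, A⁻¹ i j < 0 :=
      Finset.sum_neg' (fun j _ => hinv i j) ⟨j, Finset.mem_univ j, (hinv i j).lt_of_ne hj⟩
    simpa [mulVec, dotProduct] using hsum
  · simp [mulVec_neg, mulVec_mulVec, mul_nonsing_inv A hdet]

end Matrix

theorem isHurwitz_transpose_iff {n : ℕ} {A : Matrix (Fin n) (Fin n) ℝ} :
    IsHurwitz Aᵀ ↔ IsHurwitz A := by
  rw [IsHurwitz, IsHurwitz, transpose_map, spectrum_transpose]

theorem IsHurwitz.eventually_tendsto_pow_one_add_smul {n : ℕ} {A : Matrix (Fin n) (Fin n) ℝ}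
    (hA : IsHurwitz A) : ∀ᶠ t : ℝ in 𝓝[>] 0, Tendsto ((1 + t • A) ^ ·) atTop (𝓝 0) := by
  filter_upwards [(finite_spectrum (A.map ((↑) : ℝ → ℂ))).eventually_all.mpr
      fun μ hμ => Complex.eventually_norm_one_add_mul_lt_one (hA μ hμ), self_mem_nhdsWithin]
    with t ht (htpos : 0 < t)
  refine tendsto_pow_atTop_nhds_zero_of_spectrum_map_ofReal fun ν hν => ?_
  obtain ⟨μ, hμ, rfl⟩ := mem_spectrum_map_ofReal_one_add_smul htpos.ne' hν
  exact ht μ hμ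

namespace Matrix.IsMetzler

variable {ι : Type*} [Fintype ι] {A : Matrix ι ι ℝ}

theorem mulVec_apply_le (hA : A.IsMetzler) {x y : ι → ℝ} {k : ι} (hxy : x ≤ y)
    (hk : x k = y k) : (A *ᵥ x) k ≤ (A *ᵥ y) k := by
  refine Finset.sum_le_sum fun j _ => ?_
  rcases eq_or_ne k j with rfl | hkj
  · rw [hk]
  · exact mul_le_mul_of_nonneg_left (hxy j) (hA k j hkj)

section PositiveTestVector

variable {z : ι → ℝ} (hz : ∀ i, 0 < z i) (hAz : ∀ i, (A *ᵥ z) i < 0)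
include hz hAz

theorem exists_apply_pos_and_mulVec_apply_neg (hA : A.IsMetzler) {x : ι → ℝ}
    (hx : ∃ i, 0 < x i) : ∃ k, 0 < x k ∧ (A *ᵥ x) k < 0 := by
  obtain ⟨i, hi⟩ := hx
  obtain ⟨k, -, hk⟩ :=
    Finset.exists_max_image Finset.univ (fun j => x j / z j) ⟨i, Finset.mem_univ i⟩
  set t := x k / z k
  have ht : 0 < t := (div_pos hi (hz i)).trans_le (hk i (Finset.mem_univ i))
  have hxt : x ≤ t • z := fun j => (div_le_iff₀ (hz j)).mp (hk j (Finset.mem_univ j))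
  have hxk : x k = (t • z) k := (div_mul_cancel₀ _ (hz k).ne').symm
  refine ⟨k, hxk ▸ mul_pos ht (hz k), ?_⟩
  calc (A *ᵥ x) k ≤ (A *ᵥ (t • z)) k := hA.mulVec_apply_le hxt hxk
    _ = t * (A *ᵥ z) k := by rw [mulVec_smul, Pi.smul_apply, smul_eq_mul]
    _ < 0 := mul_neg_of_pos_of_neg ht (hAz k)

theorem nonpos_of_mulVec_nonneg (hA : A.IsMetzler) {x : ι → ℝ} (hx : 0 ≤ A *ᵥ x) : x ≤ 0 := by
  intro i
  by_contra! hi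
  obtain ⟨k, -, hk⟩ := hA.exists_apply_pos_and_mulVec_apply_neg hz hAz ⟨i, hi⟩
  exact (hx k).not_gt hk

theorem isUnit_of_pos_mulVec_neg [DecidableEq ι] (hA : A.IsMetzler) : IsUnit A := by
  rw [isUnit_iff_isUnit_det, isUnit_iff_ne_zero, Ne, ← exists_mulVec_eq_zero_iff]
  rintro ⟨v, hv, hAv⟩
  have hle := hA.nonpos_of_mulVec_nonneg hz hAz (x := v) (by simp [hAv])
  have hge := hA.nonpos_of_mulVec_nonneg hz hAz (x := -v) (by simp [mulVec_neg, hAv])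
  exact hv (le_antisymm hle (neg_nonpos.mp hge))

theorem inv_apply_nonpos_of_pos_mulVec_neg [DecidableEq ι] (hA : A.IsMetzler) (i j : ι) :
    A⁻¹ i j ≤ 0 := by
  have hcol : A *ᵥ (A⁻¹ *ᵥ Pi.single j 1) = Pi.single j 1 := by
    rw [mulVec_mulVec, mul_nonsing_inv _ ((isUnit_iff_isUnit_det A).mp
      (hA.isUnit_of_pos_mulVec_neg hz hAz)), one_mulVec]
  simpa using hA.nonpos_of_mulVec_nonneg hz hAz (x := A⁻¹ *ᵥ Pi.single j 1)
    (by rw [hcol]; exact Pi.single_nonneg.mpr zero_le_one) i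

end PositiveTestVector

theorem re_mul_norm_le_mulVec_norm (hA : A.IsMetzler) {v : ι → ℂ} {μ : ℂ}
    (hv : A.map ((↑) : ℝ → ℂ) *ᵥ v = μ • v) (k : ι) :
    μ.re * ‖v k‖ ≤ (A *ᵥ fun j => ‖v j‖) k := by
  classical
  have hsplit : (μ - A k k) * v k = ∑ j ∈ Finset.univ.erase k, (A k j : ℂ) * v j := by
    have := congrFun hv k
    simp only [mulVec, dotProduct, map_apply, Pi.smul_apply, smul_eq_mul] at this
    rw [sub_mul, ← this, ← Finset.add_sum_erase _ _ (Finset.mem_univ k)]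
    ring
  have hoff : ‖μ - A k k‖ * ‖v k‖ ≤ ∑ j ∈ Finset.univ.erase k, A k j * ‖v j‖ := by
    rw [← norm_mul, hsplit]
    refine (norm_sum_le _ _).trans (Finset.sum_le_sum fun j hj => ?_)
    rw [norm_mul, Complex.norm_real,
      Real.norm_of_nonneg (hA k j (Finset.ne_of_mem_erase hj).symm)]
  calc μ.re * ‖v k‖ = A k k * ‖v k‖ + (μ - A k k).re * ‖v k‖ := by
        rw [Complex.sub_re, Complex.ofReal_re]; ring
    _ ≤ A k k * ‖v k‖ + ‖μ - A k k‖ * ‖v k‖ := by gcongr; exact Complex.re_le_norm _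
    _ ≤ A k k * ‖v k‖ + ∑ j ∈ Finset.univ.erase k, A k j * ‖v j‖ := by gcongr
    _ = (A *ᵥ fun j => ‖v j‖) k :=
      Finset.add_sum_erase _ (fun j => A k j * ‖v j‖) (Finset.mem_univ k)

theorem eventually_one_add_smul_apply_nonneg [DecidableEq ι] (hA : A.IsMetzler) :
    ∀ᶠ t : ℝ in 𝓝[>] 0, ∀ i j, 0 ≤ (1 + t • A) i j := by
  simp only [eventually_all]
  intro i j
  rcases eq_or_ne i j with rfl | hij
  · have hlim : Tendsto (fun t : ℝ => 1 + t * A i i) (𝓝[>] 0) (𝓝 1) := by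
      have hcont : Continuous fun t : ℝ => 1 + t * A i i := by fun_prop
      simpa using (hcont.tendsto 0).mono_left nhdsWithin_le_nhds
    filter_upwards [hlim.eventually_const_lt zero_lt_one] with t ht
    simpa using ht.le
  · filter_upwards [self_mem_nhdsWithin] with t (ht : 0 < t)
    simpa [hij] using mul_nonneg ht.le (hA i j hij)

theorem isHurwitz_of_pos_mulVec_neg {n : ℕ} {A : Matrix (Fin n) (Fin n) ℝ}
    (hA : A.IsMetzler) {z : Fin n → ℝ} (hz : ∀ i, 0 < z i) (hAz : ∀ i, (A *ᵥ z) i < 0) :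
    IsHurwitz A := by
  intro μ hμ
  obtain ⟨v, hv0, hv⟩ := exists_mulVec_eq_smul_of_mem_spectrum hμ
  obtain ⟨i, hi⟩ := Function.ne_iff.mp hv0
  obtain ⟨k, hk, hAk⟩ := hA.exists_apply_pos_and_mulVec_apply_neg hz hAz
    (x := fun j => ‖v j‖) ⟨i, norm_pos_iff.mpr hi⟩
  exact neg_of_mul_neg_left ((hA.re_mul_norm_le_mulVec_norm hv k).trans_lt hAk) hk.le

theorem exists_pos_mulVec_neg_of_isHurwitz {n : ℕ} {A : Matrix (Fin n) (Fin n) ℝ}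
    (hA : A.IsMetzler) (hH : IsHurwitz A) :
    ∃ z : Fin n → ℝ, (∀ i, 0 < z i) ∧ ∀ i, (A *ᵥ z) i < 0 := by
  obtain ⟨t, ⟨hP, hlim⟩, ht⟩ := ((hA.eventually_one_add_smul_apply_nonneg.and
    hH.eventually_tendsto_pow_one_add_smul).and self_mem_nhdsWithin).exists
  obtain ⟨z, hz, hPz⟩ := exists_pos_mulVec_lt_of_tendsto_pow hP hlim
  refine ⟨z, hz, fun i => neg_of_mul_neg_right (a := t) ?_ (le_of_lt ht)⟩
  simpa [add_mulVec, smul_mulVec] using hPz i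

end Matrix.IsMetzler

/-- Stability criteria for Metzler matrices. -/
theorem metzler_hurwitz_tfae {n : ℕ} (A : Matrix (Fin n) (Fin n) ℝ)
    (hMetzler : ∀ i j, i ≠ j → 0 ≤ A i j) :
    List.TFAE
      [IsHurwitz A,
       IsUnit A ∧ ∀ i j, A⁻¹ i j ≤ 0,
       ∃ z : Fin n → ℝ, (∀ i, 0 < z i) ∧ ∀ i, 0 < (-(A.mulVec z)) i,
       ∃ ξ : Fin n → ℝ, (∀ i, 0 < ξ i) ∧ ∀ i, 0 < (-(Aᵀ.mulVec ξ)) i] := by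
  have hA : A.IsMetzler := hMetzler
  simp only [Pi.neg_apply, neg_pos]
  tfae_have 1 → 3 := hA.exists_pos_mulVec_neg_of_isHurwitz
  tfae_have 3 → 1 := fun ⟨z, hz, hAz⟩ => hA.isHurwitz_of_pos_mulVec_neg hz hAz
  tfae_have 3 → 2 := fun ⟨z, hz, hAz⟩ =>
    ⟨hA.isUnit_of_pos_mulVec_neg hz hAz, hA.inv_apply_nonpos_of_pos_mulVec_neg hz hAz⟩
  tfae_have 2 → 3 := fun ⟨hU, hinv⟩ => exists_pos_mulVec_neg_of_inv_apply_nonpos hU hinv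
  tfae_have 1 ↔ 4 := by
    rw [← isHurwitz_transpose_iff]
    exact ⟨hA.transpose.exists_pos_mulVec_neg_of_isHurwitz,
      fun ⟨ξ, hξ, hAξ⟩ => hA.transpose.isHurwitz_of_pos_mulVec_neg hξ hAξ⟩
  tfae_finish
end
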